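/- arXiv:2103.02257 — 4 statements merged into one kernel-verified Lean document; each statement's English description precedes it below -/
import Mathlib

section
/- For all compositions λ and μ, the quasi-shuffle coefficient c^μ_{(1),λ} of the one-part composition (1) with λ equals the edge multiplicity κ(λ,μ) of the Gnedin–Kingman graph (in particular it vanishes unless |μ| = |λ|+1). Equivalently, the Pieri rule M_{(1)}·M_λ = Σ_μ κ(λ,μ)·M_μ holds for monomial quasisymmetric functions. -/
open scoped ENNReal NNReal

namespace GK

/-! ## The Gnedin–Kingman graph -/

/-- Decrement (if the part is ≥ 2) or delete (otherwise) the part of `μ` at position `p`. -/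
def stepAt (μ : List ℕ) (p : ℕ) : List ℕ :=
  if 2 ≤ μ.getD p 0 then μ.set p (μ.getD p 0 - 1) else μ.eraseIdx p

/-- Edge multiplicity `κ(ν,μ)` of the Gnedin–Kingman graph: the number of positions of `μ`
at which decrementing a part ≥ 2 (or deleting a part equal to 1) produces `ν`. -/
def kappa (ν μ : List ℕ) : ℕ :=
  ((Finset.range μ.length).filter fun p => stepAt μ p = ν).card

/-- `ν ↗ μ`. -/
def Rel (ν μ : List ℕ) : Prop := 0 < kappa ν μ

def IsComposition (l : List ℕ) : Prop := ∀ n ∈ l, 0 < n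

/-- Compositions: finite lists of positive integers. -/
abbrev Comp := {l : List ℕ // IsComposition l}

/-- The empty composition ∅. -/
def cEmpty : Comp := ⟨[], fun _ h => nomatch h⟩

/-- Harmonicity, for `[0,∞]`-valued functions on the Gnedin–Kingman graph
(with the conventions `0·∞ = 0` and `x + ∞ = ∞` of `ℝ≥0∞`). -/
def HarmonicE (φ : Comp → ℝ≥0∞) : Prop :=
  ∀ l : Comp, φ l = ∑' μ : Comp, (kappa l.1 μ.1 : ℝ≥0∞) * φ μ

/-- Harmonicity, for real-valued functions. -/
def HarmonicR (φ : Comp → ℝ) : Prop :=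
  ∀ l : Comp, φ l = ∑' μ : Comp, (kappa l.1 μ.1 : ℝ) * φ μ

/-- A finite harmonic function: real-valued (hence finite), nonnegative, harmonic. -/
def FiniteHarmonic (φ : Comp → ℝ) : Prop :=
  HarmonicR φ ∧ ∀ l, 0 ≤ φ l

/-- The quasi-shuffle coefficient `c^γ_{α,β}`: the number of pairs of strictly increasing
maps `f, g` into the positions of `γ` which jointly cover all positions of `γ` and such that
each part of `γ` is the sum of the corresponding parts of `α` and `β`. -/
noncomputable def qsCoeff (α β γ : List ℕ) : ℕ :=
  Nat.card {fg : (Fin α.length → Fin γ.length) × (Fin β.length → Fin γ.length) //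
    StrictMono fg.1 ∧ StrictMono fg.2 ∧
    (∀ s, (∃ i, fg.1 i = s) ∨ (∃ j, fg.2 j = s)) ∧
    ∀ s : Fin γ.length,
      γ.get s = (∑ i, if fg.1 i = s then α.get i else 0) +
                (∑ j, if fg.2 j = s then β.get j else 0)}

/-- Indecomposability of a finite harmonic function normalized at ∅. -/
def IndecFin (φ : Comp → ℝ) : Prop :=
  ∀ φ₁ φ₂ : Comp → ℝ, FiniteHarmonic φ₁ → FiniteHarmonic φ₂ →
    φ₁ cEmpty = 1 → φ₂ cEmpty = 1 →
    ∀ c₁ c₂ : ℝ, 0 < c₁ → 0 < c₂ → c₁ + c₂ = 1 →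
      (∀ l, φ l = c₁ * φ₁ l + c₂ * φ₂ l) → φ = φ₁ ∨ φ = φ₂

/-! ## Typed weight sequences, `M°_λ` and `U₀` -/

/-- `M°_λ(v)` for a typed weight sequence `v` (`true` = h, `false` = v): the sum over all
decompositions of `λ` into consecutive (possibly empty) blocks, one for each entry of `v`,
where an h-block has at most one part and contributes `w^{|block|}`, and a v-block has all
parts equal to 1 and contributes `w^{ℓ}/ℓ!`. -/
noncomputable def Mcirc : List (ℝ × Bool) → List ℕ → ℝ
  | [], l => if l = [] then 1 else 0
  | (w, t) :: v, l =>
      ∑ i ∈ Finset.range (l.length + 1),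
        (if t then (if (l.take i).length ≤ 1 then w ^ (l.take i).sum else 0)
         else if ∀ n ∈ l.take i, n = 1 then
           w ^ (l.take i).length / ((l.take i).length.factorial : ℝ)
         else 0) * Mcirc v (l.drop i)

/-- Membership in `U₀`: positive weights of total sum 1, no two consecutive v's. -/
def memU0 (u : List (ℝ × Bool)) : Prop :=
  (∀ p ∈ u, 0 < p.1) ∧ (u.map Prod.fst).sum = 1 ∧
    List.Chain' (fun p q => p.2 = true ∨ q.2 = true) u

/-- `t_n(u)`: replace each h-interval by a part `n` and each v-interval by `n` ones. -/
def tnU (u : List (ℝ × Bool)) (n : ℕ) : List ℕ :=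
  (u.map fun p => if p.2 then [n] else List.replicate n 1).flatten

/-- Merge each maximal run of consecutive v-intervals into a single v-interval,
summing the weights. -/
def mergeV : List (ℝ × Bool) → List (ℝ × Bool)
  | [] => []
  | (w, true) :: rest => (w, true) :: mergeV rest
  | (w, false) :: rest =>
      match mergeV rest with
      | (w', false) :: rest' => (w + w', false) :: rest'
      | r => (w, false) :: r

/-! ## The set `Ũ₀` and the functions `φ_ũ` -/

/-- An element of `Ũ₀`. `t i = true` means type h, `false` means type v; `sep i` are the
separating compositions λ₀, …, λ_m. Only `w i`, `t i` for `i < m` and `sep i` for `i ≤ m`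
are relevant. -/
structure UTilde where
  m : ℕ
  w : ℕ → ℝ
  t : ℕ → Bool
  sep : ℕ → List ℕ
  sep_pos : ∀ i, i ≤ m → ∀ n ∈ sep i, 0 < n
  sep_nonempty : ∃ i, i ≤ m ∧ sep i ≠ []
  w_pos : ∀ i, i < m → 0 < w i
  w_sum : ∑ i ∈ Finset.range m, w i = 1
  vv : ∀ i, i + 1 < m → t i = false → t (i + 1) = false → sep (i + 1) ≠ []
  v_left : ∀ i, i < m → t i = false → sep i ≠ [] → 2 ≤ (sep i).getLastD 0
  v_right : ∀ i, i < m → t i = false → sep (i + 1) ≠ [] → 2 ≤ (sep (i + 1)).headD 0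

namespace UTilde

variable (u : UTilde)

/-- `λ₀ ⊔ f 0 ⊔ λ₁ ⊔ … ⊔ f (m-1) ⊔ λ_m`. -/
def blocks (f : ℕ → List ℕ) : List ℕ :=
  u.sep 0 ++ (List.ofFn fun i : Fin u.m => f (i : ℕ) ++ u.sep ((i : ℕ) + 1)).flatten

/-- `t_n(ũ)`. -/
def tn (n : ℕ) : List ℕ :=
  u.blocks fun i => if u.t i then [n] else List.replicate n 1

/-- Membership in `GK_ũ`. -/
def GKmem (l : List ℕ) : Prop := ∃ n, 1 ≤ n ∧ Relation.ReflTransGen Rel l (u.tn n)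

/-- Position `i` (of type h) is adjacent to a v-interval. -/
def adj (i : ℕ) : Prop :=
  (0 < i ∧ u.t (i - 1) = false ∧ u.sep i = []) ∨
  (i + 1 < u.m ∧ u.t (i + 1) = false ∧ u.sep (i + 1) = [])

instance (i : ℕ) : Decidable (u.adj i) := by unfold adj; infer_instance

def d (i : ℕ) : ℕ := if u.adj i then 2 else 1

/-- `λ(a,b)`, where `c` encodes both vectors: `a i = c i` on h-positions and
`b i = c i` on v-positions. -/
def lam (c : ℕ → ℕ) : List ℕ :=
  u.blocks fun i => if u.t i then [u.d i + c i] else List.replicate (c i) 1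

/-- `λ_ũ = λ(0,0)`. -/
def lam0 : List ℕ := u.lam fun _ => 0

/-- `Π_{i : t_i = h} w_i^{a_i} · Π_{i : t_i = v} w_i^{b_i}/b_i!`. -/
noncomputable def phiVal (c : ℕ → ℕ) : ℝ≥0∞ :=
  ∏ i ∈ Finset.range u.m,
    if u.t i then ENNReal.ofReal (u.w i) ^ c i
    else ENNReal.ofReal (u.w i) ^ c i / ((c i).factorial : ℝ≥0∞)

open Classical in
/-- The semifinite harmonic function `φ_ũ`. -/
noncomputable def phi (l : List ℕ) : ℝ≥0∞ :=
  if h : ∃ c : ℕ → ℕ, l = u.lam c then u.phiVal h.choose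
  else if u.GKmem l then ⊤ else 0

/-- `u^ε(ũ)`: each part of each separating composition is replaced by an h-interval
of length `ε`. -/
def uEps (ε : ℝ) : List (ℝ × Bool) :=
  ((u.sep 0).map fun _ => (ε, true)) ++
    (List.ofFn fun i : Fin u.m =>
      (u.w (i : ℕ), u.t (i : ℕ)) :: ((u.sep ((i : ℕ) + 1)).map fun _ => (ε, true))).flatten

/-- `n(ũ) = |λ₀| + … + |λ_m|`. -/
def nU : ℕ := ∑ i ∈ Finset.range (u.m + 1), (u.sep i).sum

/-- The list of intervals of `ũ` (separating compositions dropped). -/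
def ubarList : List (ℝ × Bool) := List.ofFn fun i : Fin u.m => (u.w (i : ℕ), u.t (i : ℕ))

end UTilde

/-! ## The cone `K` and the maps `F_φ` -/

/-- `V`: finitely supported real functions on compositions. -/
abbrev V := Comp →₀ ℝ

/-- `W`: span of the vectors `e_λ − Σ_μ κ(λ,μ)·e_μ`. -/
noncomputable def Wsub : Submodule ℝ V :=
  Submodule.span ℝ
    {x : V | ∃ l : Comp, ∀ μ : Comp, x μ = (if μ = l then 1 else 0) - (kappa l.1 μ.1 : ℝ)}

/-- `R = V/W`. -/
abbrev Rq := V ⧸ Wsub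

/-- The cone `K ⊆ R`: classes of nonnegative vectors. -/
def Kcone : Set Rq :=
  {a | ∃ x : V, (∀ μ, 0 ≤ x μ) ∧ Submodule.Quotient.mk x = a}

/-- `Σ_λ x(λ)·φ(λ)` for a representative `x`. -/
noncomputable def FphiV (φ : Comp → ℝ≥0∞) (x : V) : ℝ≥0∞ :=
  ∑' μ : Comp, ENNReal.ofReal (x μ) * φ μ

open Classical in
/-- `F_φ : K → [0,∞]` (defined via a choice of nonnegative representative; for harmonic `φ`
it is well defined). Outside `K` we set it to `0`. -/
noncomputable def Fphi (φ : Comp → ℝ≥0∞) (a : Rq) : ℝ≥0∞ :=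
  if h : a ∈ Kcone then FphiV φ h.choose else 0

/-- Semifiniteness: not finite, and `F_φ` is determined by its finite values from below. -/
def Semifinite (φ : Comp → ℝ≥0∞) : Prop :=
  (¬ ∀ l, φ l < ⊤) ∧
    ∀ a ∈ Kcone, Fphi φ a =
      sSup {y | ∃ b ∈ Kcone, a - b ∈ Kcone ∧ Fphi φ b < ⊤ ∧ y = Fphi φ b}

/-- Indecomposability of a semifinite harmonic function. -/
def IndecSemifinite (φ : Comp → ℝ≥0∞) : Prop :=
  ∀ ψ : Comp → ℝ≥0∞, HarmonicE ψ →
    (((∀ l, ψ l < ⊤) ∧ ψ ≠ 0) ∨ Semifinite ψ) →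
    (∀ a ∈ Kcone, Fphi ψ a ≤ Fphi φ a) →
    ∃ c : ℝ≥0, ∀ l, ψ l = (c : ℝ≥0∞) * φ l

end GK

/-! A pair `(f, g)` counted by `c^μ_{(1),λ}` is determined by the position `p = f 0` of `μ`:
`g` is strictly increasing and must hit every position other than `p`, and it hits `p` exactly
when `μ_p ≥ 2`, because the parts of `λ` are positive. If it does, `g` is the identity and `λ` is
`μ` with `μ_p` decreased by one; if not, `μ_p = 1`, `g` skips `p` and `λ` is `μ` with that part
deleted. Either way `λ = stepAt μ p`, and conversely every such `p` carries a pair. -/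

open Function

namespace Fin

lemma val_eq_of_strictMono_of_surjective {k r : ℕ} {g : Fin k → Fin r} (hg : StrictMono g)
    (hs : Surjective g) (j : Fin k) : (g j : ℕ) = j := by
  obtain rfl : k = r := by simpa using Fintype.card_of_bijective ⟨hg.injective, hs⟩
  obtain rfl : g = id := (hg.range_inj strictMono_id).mp (by rw [hs.range_eq, Set.range_id])
  rfl

lemma add_one_eq_of_range_eq_compl {k r : ℕ} {g : Fin k → Fin r} (hg : Injective g)
    {p : Fin r} (hrange : Set.range g = {p}ᶜ) : k + 1 = r := by
  have h := Nat.card_range_of_injective hg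
  rw [hrange] at h
  simp only [Nat.card_eq_fintype_card, Fintype.card_compl_set, Fintype.card_fin,
    Fintype.card_unique] at h
  have := p.pos
  omega

lemma val_eq_of_strictMono_of_range_eq_compl {k r : ℕ} {g : Fin k → Fin r} (hg : StrictMono g)
    {p : Fin r} (hrange : Set.range g = {p}ᶜ) (j : Fin k) :
    (g j : ℕ) = if (j : ℕ) < p then (j : ℕ) else (j : ℕ) + 1 := by
  obtain rfl := add_one_eq_of_range_eq_compl hg.injective hrange
  obtain rfl : g = p.succAbove :=
    (hg.range_inj (strictMono_succAbove p)).mp (by rw [hrange, range_succAbove])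
  unfold succAbove
  split_ifs <;> simp_all [Fin.lt_def]

lemma exists_strictMono_range_eq_compl {k r : ℕ} (h : k + 1 = r) (p : Fin r) :
    ∃ g : Fin k → Fin r, StrictMono g ∧ Set.range g = {p}ᶜ := by
  subst h
  exact ⟨p.succAbove, strictMono_succAbove p, range_succAbove p⟩

end Fin

section SumIte

variable {ι κ M : Type*} [Fintype ι] [DecidableEq κ] [AddCommMonoid M] {g : ι → κ}

lemma Function.Injective.sum_ite_apply_eq (hg : Injective g) (b : ι → M) (j : ι) :
    (∑ i, if g i = g j then b i else 0) = b j := by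
  classical
  simp_rw [hg.eq_iff]
  simp

lemma Finset.sum_ite_eq_zero_of_notMem_range {s : κ} (hs : s ∉ Set.range g) (b : ι → M) :
    (∑ i, if g i = s then b i else 0) = 0 :=
  Finset.sum_eq_zero fun i _ => if_neg fun h => hs ⟨i, h⟩

end SumIte

lemma Nat.card_subtype_prod_eq_card_exists {α β : Type*} {P : α → β → Prop}
    (hP : ∀ a b b', P a b → P a b' → b = b') :
    Nat.card {x : α × β // P x.1 x.2} = Nat.card {a // ∃ b, P a b} :=
  Nat.card_congr <| Equiv.ofBijective (fun x => ⟨x.1.1, x.1.2, x.2⟩)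
    ⟨fun ⟨⟨a, b⟩, hb⟩ ⟨⟨a', b'⟩, hb'⟩ h => by
      obtain rfl : a = a' := congrArg Subtype.val h
      obtain rfl := hP a b b' hb hb'
      rfl,
    fun ⟨a, b, hb⟩ => ⟨⟨(a, b), hb⟩, rfl⟩⟩

lemma Finset.card_filter_range_eq_natCard (n : ℕ) (Q : ℕ → Prop) [DecidablePred Q] :
    ((Finset.range n).filter Q).card = Nat.card {p : Fin n // Q p} := by
  rw [Nat.card_eq_fintype_card, Fintype.card_subtype, ← Nat.Iio_eq_range,
    ← Fin.map_valEmbedding_univ, Finset.filter_map, Finset.card_map]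
  rfl

namespace GK

lemma stepAt_of_two_le {γ : List ℕ} {p : ℕ} (hp : p < γ.length) (h2 : 2 ≤ γ[p]) :
    stepAt γ p = γ.set p (γ[p] - 1) := by
  rw [stepAt, List.getD_eq_getElem _ _ hp, if_pos h2]

lemma stepAt_of_not_two_le {γ : List ℕ} {p : ℕ} (hp : p < γ.length) (h2 : ¬2 ≤ γ[p]) :
    stepAt γ p = γ.eraseIdx p := by
  rw [stepAt, List.getD_eq_getElem _ _ hp, if_neg h2]

/-- `(fun _ => p, g)` is one of the pairs counted by `qsCoeff [1] β γ`. -/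
def IsPieriPair (β γ : List ℕ) (p : Fin γ.length) (g : Fin β.length → Fin γ.length) : Prop :=
  StrictMono g ∧ (∀ s, p = s ∨ ∃ j, g j = s) ∧
    ∀ s, γ.get s = (if p = s then 1 else 0) + ∑ j, if g j = s then β.get j else 0

lemma qsCoeff_singleton_one (β γ : List ℕ) :
    qsCoeff [1] β γ =
      Nat.card {pg : Fin γ.length × (Fin β.length → Fin γ.length) // IsPieriPair β γ pg.1 pg.2} := by
  dsimp only [qsCoeff, List.length_singleton]
  refine Nat.card_congr
    (Equiv.subtypeEquiv ((Equiv.funUnique (Fin 1) _).prodCongr (Equiv.refl _)) ?_)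
  rintro ⟨f, g⟩
  simp only [IsPieriPair, Equiv.prodCongr_apply, Equiv.funUnique_apply, Prod.map,
    Fin.sum_univ_one, Unique.exists_iff, Subsingleton.strictMono, true_and, Equiv.refl_apply]
  rfl

section IsPieriPair

variable {β γ : List ℕ} {p : Fin γ.length} {g g' : Fin β.length → Fin γ.length}

lemma isPieriPair_iff : IsPieriPair β γ p g ↔ StrictMono g ∧ (∀ s, p = s ∨ ∃ j, g j = s) ∧
    (∀ j, γ.get (g j) = (if p = g j then 1 else 0) + β.get j) ∧
    ∀ s ∉ Set.range g, γ.get s = if p = s then 1 else 0 := by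
  refine ⟨fun ⟨hg, hcov, hsum⟩ => ⟨hg, hcov, fun j => ?_, fun s hs => ?_⟩,
    fun ⟨hg, hcov, hget, hout⟩ => ⟨hg, hcov, fun s => ?_⟩⟩
  · rw [hsum, hg.injective.sum_ite_apply_eq]
  · rw [hsum, Finset.sum_ite_eq_zero_of_notMem_range hs, add_zero]
  · by_cases hs : s ∈ Set.range g
    · obtain ⟨j, rfl⟩ := hs
      rw [hget, hg.injective.sum_ite_apply_eq]
    · rw [hout s hs, Finset.sum_ite_eq_zero_of_notMem_range hs, add_zero]

lemma IsPieriPair.get_apply (h : IsPieriPair β γ p g) (j : Fin β.length) :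
    γ.get (g j) = (if p = g j then 1 else 0) + β.get j :=
  (isPieriPair_iff.1 h).2.2.1 j

lemma IsPieriPair.get_of_notMem_range (h : IsPieriPair β γ p g) {s : Fin γ.length}
    (hs : s ∉ Set.range g) : γ.get s = if p = s then 1 else 0 :=
  (isPieriPair_iff.1 h).2.2.2 s hs

lemma IsPieriPair.mem_range_iff (h : IsPieriPair β γ p g) (hβ : IsComposition β) :
    p ∈ Set.range g ↔ 2 ≤ γ.get p := by
  constructor
  · rintro ⟨j, rfl⟩
    have := hβ _ (List.get_mem β j)
    rw [h.get_apply, if_pos rfl]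
    omega
  · intro h2
    by_contra hp
    rw [h.get_of_notMem_range hp, if_pos rfl] at h2
    omega

lemma IsPieriPair.range_eq (h : IsPieriPair β γ p g) (hβ : IsComposition β) :
    Set.range g = {s | p ≠ s ∨ 2 ≤ γ.get p} := by
  ext s
  rcases eq_or_ne p s with rfl | hps
  · simp [h.mem_range_iff hβ]
  · simpa [hps] using (h.2.1 s).resolve_left hps

lemma IsPieriPair.unique (h : IsPieriPair β γ p g) (h' : IsPieriPair β γ p g')
    (hβ : IsComposition β) : g = g' :=
  (h.1.range_inj h'.1).mp (by rw [h.range_eq hβ, h'.range_eq hβ])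

lemma IsPieriPair.stepAt_eq (h : IsPieriPair β γ p g) (hβ : IsComposition β) :
    stepAt γ p = β := by
  by_cases h2 : 2 ≤ γ.get p
  · have hsurj : Surjective g := fun s => by
      simpa using (h.range_eq hβ).ge (Or.inr h2 : s ∈ {s | p ≠ s ∨ 2 ≤ γ.get p})
    have hlen : β.length = γ.length := by
      simpa using Fintype.card_of_bijective ⟨h.1.injective, hsurj⟩
    have hval := Fin.val_eq_of_strictMono_of_surjective h.1 hsurj
    rw [stepAt_of_two_le p.2 h2]
    refine List.ext_getElem (by simp [hlen]) fun i hi hi' => ?_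
    have := h.get_apply ⟨i, hi'⟩
    simp only [List.get_eq_getElem, hval, Fin.ext_iff] at this h2
    rw [List.getElem_set]
    split_ifs <;> simp_all
  · have hrange : Set.range g = {p}ᶜ := by
      ext s
      simp only [h.range_eq hβ, h2, or_false, Set.mem_ofPred_eq, Set.mem_compl_iff,
        Set.mem_singleton_iff, ne_comm]
    have hval := Fin.val_eq_of_strictMono_of_range_eq_compl h.1 hrange
    have hlen := Fin.add_one_eq_of_range_eq_compl h.1.injective hrange
    rw [stepAt_of_not_two_le p.2 h2]
    refine List.ext_getElem (by rw [List.length_eraseIdx_of_lt p.2]; omega) fun i hi hi' => ?_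
    have hpg : p ≠ g ⟨i, hi'⟩ := by
      simpa [hrange, eq_comm] using Set.mem_range_self (f := g) ⟨i, hi'⟩
    have := h.get_apply ⟨i, hi'⟩
    simp only [List.get_eq_getElem, hval, if_neg hpg] at this
    rw [List.getElem_eraseIdx]
    by_cases hip : i < p <;> simp only [hip, if_true, if_false, dite_true, dite_false] at this ⊢ <;>
      omega

lemma exists_isPieriPair (hγ : IsComposition γ) (hp : stepAt γ p = β) :
    ∃ g, IsPieriPair β γ p g := by
  have hpos : 0 < γ[(p : ℕ)] := hγ _ (List.getElem_mem p.2)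
  by_cases h2 : 2 ≤ γ[(p : ℕ)]
  · obtain rfl : β = γ.set p (γ[(p : ℕ)] - 1) := hp ▸ stepAt_of_two_le p.2 h2
    let e := Fin.castOrderIso (List.length_set (as := γ) (i := p) (a := γ[(p : ℕ)] - 1))
    refine ⟨e, isPieriPair_iff.2 ⟨e.strictMono, fun s => Or.inr (e.surjective s), fun j => ?_,
      fun s hs => (hs (e.surjective s)).elim⟩⟩
    simp only [e, Fin.castOrderIso_apply, List.get_eq_getElem, Fin.val_cast, List.getElem_set,
      Fin.ext_iff]
    split_ifs with hpj
    · simp only [← hpj]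
      omega
    · omega
  · obtain rfl : β = γ.eraseIdx p := hp ▸ stepAt_of_not_two_le p.2 h2
    have hlen : (γ.eraseIdx p).length + 1 = γ.length := by
      rw [List.length_eraseIdx_of_lt p.2]
      have := p.pos
      omega
    obtain ⟨g, hg, hrange⟩ := Fin.exists_strictMono_range_eq_compl hlen p
    have hval := Fin.val_eq_of_strictMono_of_range_eq_compl hg hrange
    refine ⟨g, isPieriPair_iff.2 ⟨hg, fun s => ?_, fun j => ?_, fun s hs => ?_⟩⟩
    · rcases eq_or_ne p s with hps | hps
      · exact Or.inl hps
      · exact Or.inr (by rw [← Set.mem_range, hrange]; exact hps.symm)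
    · have hpg : p ≠ g j := by simpa [hrange, eq_comm] using Set.mem_range_self (f := g) j
      simp only [List.get_eq_getElem, hval, if_neg hpg, List.getElem_eraseIdx]
      by_cases hjp : (j : ℕ) < p <;> simp [hjp]
    · obtain rfl : s = p := by simpa [hrange] using hs
      simp only [List.get_eq_getElem, if_true]
      omega

lemma exists_isPieriPair_iff (hβ : IsComposition β) (hγ : IsComposition γ) :
    (∃ g, IsPieriPair β γ p g) ↔ stepAt γ p = β :=
  ⟨fun ⟨_, h⟩ => h.stepAt_eq hβ, exists_isPieriPair hγ⟩

end IsPieriPair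

/-- the Pieri rule for monomial quasisymmetric functions —
`c^μ_{(1),λ} = κ(λ,μ)` for all compositions `λ`, `μ`. -/
theorem qsCoeff_one_eq_kappa (l μ : Comp) :
    qsCoeff [1] l.1 μ.1 = kappa l.1 μ.1 := by
  obtain ⟨β, hβ⟩ := l
  obtain ⟨γ, hγ⟩ := μ
  rw [qsCoeff_singleton_one, kappa, Finset.card_filter_range_eq_natCard,
    Nat.card_subtype_prod_eq_card_exists fun _ _ _ h h' => h.unique h' hβ]
  exact Nat.card_congr (Equiv.subtypeEquivRight fun _ => exists_isPieriPair_iff hβ hγ)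

end GK
end

section
/- For every u ∈ U₀, the function φ_u(λ) = M°_λ(u) is a finite harmonic function on the Gnedin–Kingman graph GK with φ_u(∅) = 1. -/
open scoped ENNReal NNReal

/-!
The operator `upSum f λ = Σ_μ κ(λ,μ) f(μ)` sums `f` over all ways of raising a part of `λ` by
one or inserting a new part `1`. It is a derivation of the convolution dual to concatenation,
`(f ⋆ g)(λ) = Σ_{λ = α ⊔ β} f(α) g(β)`: the new box lands either in `α` or in `β`. Since
`M°(u)` is the `⋆`-product of its one-block weights, and a block weight of weight `w` is an
eigenfunction of `upSum` with eigenvalue `w` (an h-block `w^a` becomes `w^(a+1)`; a v-block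
`w^ℓ/ℓ!` gains a `1` in `ℓ + 1` places), `M°(u)` is an eigenfunction with eigenvalue
`Σ wᵢ = 1`, i.e. harmonic.
-/

namespace List

variable {α : Type*}

theorem take_succ_insertIdx_of_le {l : List α} {p i : ℕ} (a : α) (hpi : p ≤ i) :
    (l.insertIdx p a).take (i + 1) = (l.take i).insertIdx p a :=
  ext_getElem (by grind) (by grind)

theorem drop_succ_insertIdx_of_le {l : List α} {p i : ℕ} (a : α) (hpi : p ≤ i)
    (hp : p ≤ l.length) : (l.insertIdx p a).drop (i + 1) = l.drop i :=
  ext_getElem (by grind) (by grind)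

theorem drop_insertIdx_of_le {l : List α} {p i : ℕ} (a : α) (hip : i ≤ p)
    (hp : p ≤ l.length) : (l.insertIdx p a).drop i = (l.drop i).insertIdx (p - i) a :=
  ext_getElem (by grind) (by grind)

end List

namespace GK

open Finset

lemma sum_range_sum_range_split {M : Type*} [AddCommMonoid M] (F : ℕ → ℕ → M) {N K : ℕ}
    (h : K ≤ N + 1) :
    ∑ p ∈ range N, ∑ i ∈ range K, F p i =
      ∑ i ∈ range K, ∑ p ∈ range i, F p i + ∑ i ∈ range K, ∑ q ∈ range (N - i), F (i + q) i := by
  rw [sum_comm, ← sum_add_distrib]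
  refine sum_congr rfl fun i hi => ?_
  obtain ⟨r, rfl⟩ := Nat.exists_eq_add_of_le (by rw [mem_range] at hi; omega : i ≤ N)
  rw [sum_range_add, Nat.add_sub_cancel_left]

section UpOperator

variable {R : Type*} [Semiring R]

def raiseSum (f : List ℕ → R) (l : List ℕ) : R :=
  ∑ p ∈ range l.length, f (l.modify p (· + 1))

def insertOneSum (f : List ℕ → R) (l : List ℕ) : R :=
  ∑ p ∈ range (l.length + 1), f (l.insertIdx p 1)

def upSum (f : List ℕ → R) (l : List ℕ) : R :=
  raiseSum f l + insertOneSum f l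

def deconcatConv (f g : List ℕ → R) (l : List ℕ) : R :=
  ∑ i ∈ range (l.length + 1), f (l.take i) * g (l.drop i)

theorem raiseSum_deconcatConv (f g : List ℕ → R) (l : List ℕ) :
    raiseSum (deconcatConv f g) l =
      deconcatConv (raiseSum f) g l + deconcatConv f (raiseSum g) l := by
  simp only [raiseSum, deconcatConv, List.length_modify]
  rw [sum_range_sum_range_split _ le_rfl]
  congr 1 <;> refine sum_congr rfl fun i hi => ?_
  · rw [sum_mul, List.length_take_of_le (by grind)]
    refine sum_congr rfl fun p hp => ?_
    rw [List.take_modify, List.drop_modify_of_lt _ _ _ _ (mem_range.1 hp)]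
  · rw [mul_sum, List.length_drop]
    refine sum_congr rfl fun q _ => ?_
    rw [List.take_modify, List.modify_eq_self (by simp),
      List.drop_modify_of_ge _ _ _ _ (by omega), Nat.add_sub_cancel_left]

theorem insertOneSum_deconcatConv (f g : List ℕ → R) (l : List ℕ) :
    insertOneSum (deconcatConv f g) l =
      deconcatConv (insertOneSum f) g l + deconcatConv f (insertOneSum g) l := by
  have hlen : ∀ p ∈ range (l.length + 1), deconcatConv f g (l.insertIdx p 1) =
      ∑ i ∈ range (l.length + 2), f ((l.insertIdx p 1).take i) * g ((l.insertIdx p 1).drop i) :=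
    fun p hp => by rw [deconcatConv, List.length_insertIdx_of_le_length (by grind)]
  rw [insertOneSum, sum_congr rfl hlen, sum_range_sum_range_split _ le_rfl,
    sum_range_succ' _ (l.length + 1), sum_range_succ _ (l.length + 1)]
  simp only [range_zero, sum_empty, add_zero, Nat.sub_self, deconcatConv, insertOneSum]
  congr 1 <;> refine sum_congr rfl fun i hi => ?_
  · rw [sum_mul, List.length_take_of_le (by grind)]
    refine sum_congr rfl fun p hp => ?_
    have hpi : p ≤ i := by grind
    rw [List.take_succ_insertIdx_of_le 1 hpi, List.drop_succ_insertIdx_of_le 1 hpi (by grind)]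
  · rw [mul_sum, List.length_drop, Nat.sub_add_comm (by grind)]
    refine sum_congr rfl fun q hq => ?_
    rw [List.take_insertIdx_eq_take_of_le _ _ _ _ (by omega),
      List.drop_insertIdx_of_le 1 (by omega) (by grind), Nat.add_sub_cancel_left]

theorem upSum_deconcatConv (f g : List ℕ → R) (l : List ℕ) :
    upSum (deconcatConv f g) l = deconcatConv (upSum f) g l + deconcatConv f (upSum g) l := by
  simp only [upSum, raiseSum_deconcatConv, insertOneSum_deconcatConv, deconcatConv, add_mul,
    mul_add, sum_add_distrib]
  abel

end UpOperator

section GraphStructure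

lemma IsComposition.take {l : List ℕ} (hl : IsComposition l) (i : ℕ) :
    IsComposition (l.take i) :=
  fun n hn => hl n (List.mem_of_mem_take hn)

lemma IsComposition.drop {l : List ℕ} (hl : IsComposition l) (i : ℕ) :
    IsComposition (l.drop i) :=
  fun n hn => hl n (List.mem_of_mem_drop hn)

lemma IsComposition.modify_succ {l : List ℕ} (hl : IsComposition l) (p : ℕ) :
    IsComposition (l.modify p (· + 1)) := by
  intro n hn
  obtain ⟨i, hi, rfl⟩ := List.getElem_of_mem hn
  have : 0 < l[i]'(by simpa using hi) := hl _ (List.getElem_mem _)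
  grind

lemma IsComposition.insertIdx_one {l : List ℕ} (hl : IsComposition l) (p : ℕ) :
    IsComposition (l.insertIdx p 1) := fun n hn =>
  (List.eq_or_mem_of_mem_insertIdx hn).elim (fun h => h ▸ Nat.one_pos) (hl n)

lemma stepAt_modify_succ {l : List ℕ} (hl : IsComposition l) {q : ℕ} (hq : q < l.length) :
    stepAt (l.modify q (· + 1)) q = l := by
  have : 0 < l[q] := hl _ (List.getElem_mem hq)
  rw [stepAt, if_pos (by grind)]
  exact List.ext_getElem (by grind) (by grind)

lemma stepAt_insertIdx_one (l : List ℕ) (q : ℕ) : stepAt (l.insertIdx q 1) q = l := by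
  rw [stepAt, if_neg (by grind)]
  exact List.eraseIdx_insertIdx_self 1

lemma modify_succ_eq_or_insertIdx_one_eq_of_stepAt_eq {l μ : List ℕ} (hμ : IsComposition μ)
    {q : ℕ} (hq : q < μ.length) (h : stepAt μ q = l) :
    l.modify q (· + 1) = μ ∨ l.insertIdx q 1 = μ := by
  have : 0 < μ[q] := hμ _ (List.getElem_mem hq)
  rw [stepAt] at h
  split_ifs at h
  · exact .inl (List.ext_getElem (by grind) (by grind))
  · subst h
    right
    grind [List.insertIdx_eraseIdx_getElem]

lemma stepAt_eq_iff {l μ : List ℕ} (hl : IsComposition l) (hμ : IsComposition μ) {q : ℕ} :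
    q < μ.length ∧ stepAt μ q = l ↔
      q < l.length ∧ l.modify q (· + 1) = μ ∨ q < l.length + 1 ∧ l.insertIdx q 1 = μ := by
  constructor
  · rintro ⟨hq, h⟩
    rcases modify_succ_eq_or_insertIdx_one_eq_of_stepAt_eq hμ hq h with rfl | rfl
    · exact .inl ⟨by simpa using hq, rfl⟩
    · exact .inr ⟨by grind, rfl⟩
  · rintro (⟨hq, rfl⟩ | ⟨hq, rfl⟩)
    · exact ⟨by simpa using hq, stepAt_modify_succ hl hq⟩
    · exact ⟨by grind, stepAt_insertIdx_one l q⟩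

lemma kappa_eq_card_add_card {l μ : List ℕ} (hl : IsComposition l) (hμ : IsComposition μ) :
    kappa l μ = #{p ∈ range l.length | l.modify p (· + 1) = μ} +
      #{p ∈ range (l.length + 1) | l.insertIdx p 1 = μ} := by
  rw [kappa, ← card_union_of_disjoint]
  · congr 1
    ext q
    simp only [mem_filter, mem_union, mem_range, stepAt_eq_iff hl hμ]
  · refine disjoint_left.2 fun p hmod hins => ?_
    rw [mem_filter, mem_range] at hmod hins
    have := congrArg List.length (hmod.2.trans hins.2.symm)
    grind

lemma hasSum_ite_eq_val (φ : List ℕ → ℝ) {ν : List ℕ} (hν : IsComposition ν) :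
    HasSum (fun μ : Comp => if ν = μ.1 then φ μ.1 else 0) (φ ν) := by
  convert hasSum_ite_eq (⟨ν, hν⟩ : Comp) (φ ν) using 2 with μ
  by_cases h : ν = μ.1
  · simp [h]
  · simp [h, Subtype.ext_iff, Ne.symm h]

theorem hasSum_kappa_mul (φ : List ℕ → ℝ) {l : List ℕ} (hl : IsComposition l) :
    HasSum (fun μ : Comp => (kappa l μ.1 : ℝ) * φ μ.1) (upSum φ l) := by
  have h := (hasSum_sum (s := range l.length) fun p _ =>
      hasSum_ite_eq_val φ (hl.modify_succ p)).add
    (hasSum_sum (s := range (l.length + 1)) fun p _ => hasSum_ite_eq_val φ (hl.insertIdx_one p))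
  rw [upSum, raiseSum, insertOneSum]
  convert h using 2 with μ
  rw [kappa_eq_card_add_card hl μ.2, card_filter, card_filter]
  push_cast
  simp only [add_mul, sum_mul, ite_mul, one_mul, zero_mul]

end GraphStructure

section Mcirc

noncomputable def blockWeight (w : ℝ) : Bool → List ℕ → ℝ
  | true, b => if b.length ≤ 1 then w ^ b.sum else 0
  | false, b => if ∀ n ∈ b, n = 1 then w ^ b.length / (b.length.factorial : ℝ) else 0

lemma Mcirc_cons (w : ℝ) (t : Bool) (v : List (ℝ × Bool)) :
    Mcirc ((w, t) :: v) = deconcatConv (blockWeight w t) (Mcirc v) := by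
  funext l
  cases t <;> rfl

lemma upSum_blockWeight_true (w : ℝ) (b : List ℕ) :
    upSum (blockWeight w true) b = w * blockWeight w true b := by
  match b with
  | [] => simp [upSum, raiseSum, insertOneSum, blockWeight]
  | [a] => simp [upSum, raiseSum, insertOneSum, blockWeight, sum_range_succ, pow_succ, mul_comm]
  | a :: c :: rest =>
    simp only [upSum, raiseSum, insertOneSum, blockWeight, List.length_modify, List.length_cons]
    rw [sum_eq_zero fun p _ => if_neg (by omega), sum_eq_zero fun p _ => if_neg ?_,
      if_neg (by omega)]
    · simp
    · have := List.length_le_length_insertIdx (l := a :: c :: rest) (i := p) (x := 1)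
      simp only [List.length_cons] at this
      omega

lemma upSum_blockWeight_false (w : ℝ) {b : List ℕ} (hb : IsComposition b) :
    upSum (blockWeight w false) b = w * blockWeight w false b := by
  have hraise : raiseSum (blockWeight w false) b = 0 := by
    refine sum_eq_zero fun p hp => (if_neg fun hall => ?_ : blockWeight w false _ = 0)
    have hp : p < b.length := mem_range.1 hp
    have : 0 < b[p] := hb _ (List.getElem_mem hp)
    have := hall _ (List.getElem_mem (by simpa using hp))
    grind
  have hins : ∀ p ∈ range (b.length + 1),
      ((∀ n ∈ b.insertIdx p 1, n = 1) ↔ ∀ n ∈ b, n = 1) := fun p hp => by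
    simp [List.mem_insertIdx (Nat.lt_succ_iff.1 (mem_range.1 hp))]
  rw [upSum, hraise, zero_add, insertOneSum]
  by_cases hone : ∀ n ∈ b, n = 1
  · have hval : ∀ p ∈ range (b.length + 1), blockWeight w false (b.insertIdx p 1) =
        w ^ (b.length + 1) / ((b.length + 1).factorial : ℝ) := fun p hp => by
      rw [blockWeight, if_pos ((hins p hp).2 hone),
        List.length_insertIdx_of_le_length (Nat.lt_succ_iff.1 (mem_range.1 hp))]
    rw [sum_congr rfl hval, sum_const, card_range, nsmul_eq_mul, blockWeight, if_pos hone,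
      Nat.factorial_succ, Nat.cast_mul, pow_succ]
    field_simp
  · rw [sum_eq_zero fun p hp => by rw [blockWeight, if_neg (mt (hins p hp).1 hone)],
      blockWeight, if_neg hone, mul_zero]

lemma upSum_blockWeight (w : ℝ) (t : Bool) {b : List ℕ} (hb : IsComposition b) :
    upSum (blockWeight w t) b = w * blockWeight w t b := by
  cases t
  exacts [upSum_blockWeight_false w hb, upSum_blockWeight_true w b]

lemma blockWeight_nonneg {w : ℝ} (hw : 0 ≤ w) (t : Bool) (b : List ℕ) :
    0 ≤ blockWeight w t b := by
  cases t <;> simp only [blockWeight] <;> split_ifs <;> positivity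

lemma Mcirc_nonneg {u : List (ℝ × Bool)} (hu : ∀ p ∈ u, 0 ≤ p.1) (l : List ℕ) :
    0 ≤ Mcirc u l := by
  induction u generalizing l with
  | nil => unfold Mcirc; split_ifs <;> norm_num
  | cons wt v ih =>
    rw [Mcirc_cons]
    refine sum_nonneg fun i _ => mul_nonneg (blockWeight_nonneg (hu wt (by simp)) _ _) (ih ?_ _)
    exact fun p hp => hu p (List.mem_cons_of_mem _ hp)

lemma Mcirc_nil (u : List (ℝ × Bool)) : Mcirc u [] = 1 := by
  induction u with
  | nil => rfl
  | cons wt v ih =>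
    obtain ⟨w, t⟩ := wt
    cases t <;> simp [Mcirc_cons, deconcatConv, blockWeight, ih]

theorem upSum_Mcirc (u : List (ℝ × Bool)) {l : List ℕ} (hl : IsComposition l) :
    upSum (Mcirc u) l = (u.map Prod.fst).sum * Mcirc u l := by
  induction u generalizing l with
  | nil =>
    have hraise : ∀ p ∈ range l.length, Mcirc [] (l.modify p (· + 1)) = 0 := fun p hp =>
      if_neg (List.ne_nil_of_length_pos (by grind))
    have hins : ∀ p ∈ range (l.length + 1), Mcirc [] (l.insertIdx p 1) = 0 := fun p hp =>
      if_neg (List.ne_nil_of_length_pos (by grind))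
    simp [upSum, raiseSum, insertOneSum, sum_eq_zero hraise, sum_eq_zero hins]
  | cons wt v ih =>
    obtain ⟨w, t⟩ := wt
    simp only [Mcirc_cons, upSum_deconcatConv, List.map_cons, List.sum_cons, add_mul]
    simp only [deconcatConv, mul_sum, ← sum_add_distrib]
    refine sum_congr rfl fun i _ => ?_
    rw [upSum_blockWeight w t (hl.take i), ih (hl.drop i)]
    ring

end Mcirc

/-- for every `u ∈ U₀`, `φ_u(λ) = M°_λ(u)` is a finite harmonic function
on `GK` with `φ_u(∅) = 1`. -/
theorem phiU_finiteHarmonic (u : List (ℝ × Bool)) (hu : memU0 u) :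
    FiniteHarmonic (fun l : Comp => Mcirc u l.1) ∧ Mcirc u [] = 1 := by
  obtain ⟨hpos, hsum, -⟩ := hu
  refine ⟨⟨fun l => ?_, fun l => Mcirc_nonneg (fun p hp => (hpos p hp).le) l.1⟩, Mcirc_nil u⟩
  rw [(hasSum_kappa_mul (Mcirc u) l.2).tsum_eq, upSum_Mcirc u l.2, hsum, one_mul]

end GK
end

section
/- For every ũ ∈ Ũ₀, the map (a,b) ↦ λ(a,b), from pairs of nonnegative-integer vectors indexed by the h-positions and v-positions of ũ to compositions, is injective, and its image is exactly {λ ∈ GK_ũ : λ ≥ λ_ũ}. -/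
open scoped ENNReal NNReal

/-!
Below a composition, the order of the Gnedin–Kingman graph is the embedding order: `ν ≤ μ` iff
`ν` is obtained from `μ` by deleting some parts and decreasing others. Encode `ũ` as a word of
tokens (parts of the separating compositions, h-intervals, v-intervals). The conditions on `ũ`
make every part of `λ_ũ` next to a v-interval at least `2`, so such a part is never matched inside
a run of ones. Hence, if `λ_ũ ≤ λ ≤ t_n(ũ)`, the composed embedding of `λ_ũ` into `t_n(ũ)` is
aligned token by token: were the part of `λ_ũ` at some token matched further right, all later
parts would be pushed right too and the last one would find no room. So `λ` carries at each token
the same part of a separating composition, a part `≥ d_i` at an h-interval, or a run of ones at a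
v-interval, i.e. `λ = λ(a,b)`; and since the parts around a run of ones are at least `2`, the run
lengths, hence `(a,b)`, can be read off `λ(a,b)`.
-/

namespace GK

theorem IsComposition.of_cons {a : ℕ} {x : List ℕ} (h : IsComposition (a :: x)) :
    IsComposition x :=
  fun n hn => h n (List.mem_cons_of_mem a hn)

theorem isComposition_replicate_one (n : ℕ) : IsComposition (List.replicate n 1) :=
  fun _ h => (List.eq_of_mem_replicate h).symm ▸ one_pos

def Embeds (x y : List ℕ) : Prop := List.SublistForall₂ (fun a b : ℕ => 0 < a ∧ a ≤ b) x y

section Embeds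

variable {x y z : List ℕ}

theorem IsComposition.embeds_of_sublist (hx : IsComposition x) (h : x.Sublist y) :
    Embeds x y :=
  List.sublistForall₂_iff.2 ⟨x, List.forall₂_same.2 fun a ha => ⟨hx a ha, le_rfl⟩, h⟩

theorem IsComposition.embeds_refl (hx : IsComposition x) : Embeds x x :=
  hx.embeds_of_sublist (List.Sublist.refl x)

theorem Embeds.trans (hxy : Embeds x y) (hyz : Embeds y z) : Embeds x z :=
  haveI : IsTrans ℕ fun a b : ℕ => 0 < a ∧ a ≤ b := ⟨fun _ _ _ h h' => ⟨h.1, h.2.trans h'.2⟩⟩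
  IsTrans.trans (r := List.SublistForall₂ _) _ _ _ hxy hyz

theorem Embeds.isComposition (h : Embeds x y) : IsComposition x := by
  induction h with
  | nil => exact fun _ h => nomatch h
  | cons hab _ ih => exact List.forall_mem_cons.2 ⟨hab.1, ih⟩
  | cons_right _ ih => exact ih

theorem not_embeds_cons_nil (a : ℕ) : ¬ Embeds (a :: x) [] := nofun

theorem Embeds.of_cons_left {a : ℕ} (h : Embeds (a :: x) y) : Embeds x y := by
  induction y with
  | nil => exact absurd h (not_embeds_cons_nil a)
  | cons b y ih =>
    rcases h with _ | ⟨-, h⟩ | h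
    · exact h.cons_right
    · exact (ih h).cons_right

theorem Embeds.of_cons_cons {a b : ℕ} (h : Embeds (a :: x) (b :: y)) : Embeds x y := by
  rcases h with _ | ⟨-, h⟩ | h
  · exact h
  · exact Embeds.of_cons_left h

theorem Embeds.append_left (z : List ℕ) (h : Embeds x y) : Embeds x (z ++ y) := by
  induction z with
  | nil => exact h
  | cons _ _ ih => exact ih.cons_right

theorem Embeds.append {x' y' : List ℕ} (h : Embeds x y) (h' : Embeds x' y') :
    Embeds (x ++ x') (y ++ y') := by
  induction h with
  | nil => exact h'.append_left _
  | cons hab _ ih => exact ih.cons hab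
  | cons_right _ ih => exact ih.cons_right

theorem embeds_replicate_one {a b : ℕ} (h : a ≤ b) :
    Embeds (List.replicate a 1) (List.replicate b 1) :=
  (isComposition_replicate_one a).embeds_of_sublist ((List.replicate_sublist_replicate 1).2 h)

theorem exists_eq_replicate_one_append_of_embeds {n : ℕ} (h : Embeds x (List.replicate n 1 ++ y)) :
    ∃ j x', x = List.replicate j 1 ++ x' ∧ Embeds x' y := by
  induction n generalizing x with
  | zero => exact ⟨0, x, rfl, h⟩
  | succ n ih =>
    rcases h with _ | ⟨hab, h⟩ | h
    · exact ⟨0, [], rfl, .nil⟩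
    · obtain ⟨j, x', rfl, hx'⟩ := ih h
      exact ⟨j + 1, x', by rw [le_antisymm hab.2 hab.1]; rfl, hx'⟩
    · exact ih h

theorem Embeds.of_replicate_one_append (hx : ∀ a ∈ x.head?, 2 ≤ a) {j : ℕ}
    (h : Embeds x (List.replicate j 1 ++ y)) : Embeds x y := by
  induction j with
  | zero => exact h
  | succ j ih =>
    rcases h with _ | ⟨hab, -⟩ | h
    · exact .nil
    · have := hx _ rfl; omega
    · exact ih h

theorem replicate_one_append_inj {a b : ℕ} {x' y' : List ℕ} (hx : ∀ c ∈ x'.head?, 2 ≤ c)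
    (hy : ∀ c ∈ y'.head?, 2 ≤ c) (h : List.replicate a 1 ++ x' = List.replicate b 1 ++ y') :
    a = b ∧ x' = y' := by
  induction a generalizing b with
  | zero =>
    cases b with
    | zero => exact ⟨rfl, h⟩
    | succ b =>
      rw [List.replicate_zero, List.nil_append] at h
      simp [h, List.replicate_succ] at hx
  | succ a ih =>
    cases b with
    | zero =>
      rw [List.replicate_zero, List.nil_append] at h
      simp [← h, List.replicate_succ] at hy
    | succ b =>
      obtain ⟨rfl, hxy⟩ := ih (List.cons_injective h)
      exact ⟨rfl, hxy⟩

end Embeds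

section Order

open Relation

variable {ν μ : List ℕ}

theorem rel_iff_exists_stepAt : Rel ν μ ↔ ∃ p < μ.length, stepAt μ p = ν := by
  simp [Rel, kappa, Finset.card_pos, Finset.Nonempty]

theorem rel_cons (a : ℕ) (h : Rel ν μ) : Rel (a :: ν) (a :: μ) := by
  obtain ⟨p, hp, rfl⟩ := rel_iff_exists_stepAt.1 h
  refine rel_iff_exists_stepAt.2 ⟨p + 1, by simpa using hp, ?_⟩
  unfold stepAt
  simp only [List.getD_cons_succ, List.set_cons_succ, List.eraseIdx_cons_succ]
  split <;> rfl

theorem rel_succ_cons {b : ℕ} (hb : 0 < b) (x : List ℕ) : Rel (b :: x) ((b + 1) :: x) :=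
  rel_iff_exists_stepAt.2 ⟨0, by simp, by simp [stepAt, hb.ne']⟩

theorem rel_one_cons (x : List ℕ) : Rel x (1 :: x) :=
  rel_iff_exists_stepAt.2 ⟨0, by simp, by simp [stepAt]⟩

theorem reflTransGen_rel_cons (a : ℕ) (h : ReflTransGen Rel ν μ) :
    ReflTransGen Rel (a :: ν) (a :: μ) :=
  h.lift (a :: ·) fun _ _ => rel_cons a

theorem reflTransGen_rel_cons_of_le {a b : ℕ} (ha : 0 < a) (hab : a ≤ b) (x : List ℕ) :
    ReflTransGen Rel (a :: x) (b :: x) := by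
  induction b, hab using Nat.le_induction with
  | base => exact .refl
  | succ b hab ih => exact ih.tail (rel_succ_cons (ha.trans_le hab) x)

theorem reflTransGen_rel_cons_right {b : ℕ} (hb : 0 < b) (x : List ℕ) :
    ReflTransGen Rel x (b :: x) :=
  (ReflTransGen.single (rel_one_cons x)).trans (reflTransGen_rel_cons_of_le one_pos hb x)

theorem embeds_set (hμ : IsComposition μ) {p x : ℕ} (hx : 0 < x) (hle : x ≤ μ.getD p 0) :
    Embeds (μ.set p x) μ := by
  induction μ generalizing p with
  | nil => exact .nil
  | cons b μ ih =>
    cases p with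
    | zero => exact .cons ⟨hx, hle⟩ hμ.of_cons.embeds_refl
    | succ p => exact .cons ⟨hμ b List.mem_cons_self, le_rfl⟩ (ih hμ.of_cons hle)

theorem Embeds.of_rel (hμ : IsComposition μ) (h : Rel ν μ) : Embeds ν μ := by
  obtain ⟨p, -, rfl⟩ := rel_iff_exists_stepAt.1 h
  unfold stepAt
  split_ifs with hp
  · exact embeds_set hμ (by omega) (by omega)
  · have hsub := List.eraseIdx_sublist μ p
    exact IsComposition.embeds_of_sublist (fun n hn => hμ n (hsub.subset hn)) hsub

theorem reflTransGen_rel_nil (hμ : IsComposition μ) : ReflTransGen Rel [] μ := by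
  induction μ with
  | nil => exact .refl
  | cons b μ ih =>
    exact (ih hμ.of_cons).trans (reflTransGen_rel_cons_right (hμ b List.mem_cons_self) μ)

theorem Embeds.reflTransGen (hμ : IsComposition μ) (h : Embeds ν μ) :
    ReflTransGen Rel ν μ := by
  induction h with
  | nil => exact reflTransGen_rel_nil hμ
  | cons hab _ ih =>
    exact (reflTransGen_rel_cons _ (ih hμ.of_cons)).trans
      (reflTransGen_rel_cons_of_le hab.1 hab.2 _)
  | cons_right _ ih =>
    exact (ih hμ.of_cons).trans (reflTransGen_rel_cons_right (hμ _ List.mem_cons_self) _)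

theorem reflTransGen_rel_iff_embeds (hμ : IsComposition μ) :
    ReflTransGen Rel ν μ ↔ Embeds ν μ := by
  refine ⟨fun h => ?_, Embeds.reflTransGen hμ⟩
  induction h using ReflTransGen.head_induction_on with
  | refl => exact hμ.embeds_refl
  | head hab _ ih => exact (Embeds.of_rel ih.isComposition hab).trans ih

end Order

/-- Tokens describing the shape of `ũ`: `part k` is a part of a separating composition,
`hslot d` an h-interval whose part in `λ_ũ` is `d`, and `vslot` a v-interval. -/
inductive Tok where
  | part (k : ℕ)
  | hslot (d : ℕ)
  | vslot

namespace Tok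

@[simp]
def base : Tok → ℕ
  | part k => k
  | hslot d => d
  | vslot => 0

def tn : List Tok → ℕ → List ℕ
  | [], _ => []
  | part k :: T, n => k :: tn T n
  | hslot _ :: T, n => n :: tn T n
  | vslot :: T, n => List.replicate n 1 ++ tn T n

/-- `lam T c` fills the `i`-th slot of `T` (counted from `0`) with `c i`. -/
def lam : List Tok → (ℕ → ℕ) → List ℕ
  | [], _ => []
  | part k :: T, c => k :: lam T c
  | hslot d :: T, c => (d + c 0) :: lam T fun i => c (i + 1)
  | vslot :: T, c => List.replicate (c 0) 1 ++ lam T fun i => c (i + 1)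

def slots : List Tok → ℕ
  | [] => 0
  | part _ :: T => slots T
  | hslot _ :: T => slots T + 1
  | vslot :: T => slots T + 1

/-- As `vslot.base = 0`, this also excludes two adjacent v-tokens. -/
def Compat (A B : Tok) : Prop := (A = vslot → 2 ≤ B.base) ∧ (B = vslot → 2 ≤ A.base)

structure Good (T : List Tok) : Prop where
  pos : ∀ A ∈ T, A ≠ vslot → 0 < A.base
  chain : T.IsChain Compat

section Render

variable (X Y : List Tok)

theorem tn_append (n : ℕ) : tn (X ++ Y) n = tn X n ++ tn Y n := by
  induction X with
  | nil => rfl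
  | cons A X ih => cases A <;> simp [tn, ih]

theorem slots_append : slots (X ++ Y) = slots X + slots Y := by
  induction X with
  | nil => simp [slots]
  | cons A X ih => cases A <;> simp [slots, ih] <;> omega

theorem lam_append (c : ℕ → ℕ) :
    lam (X ++ Y) c = lam X c ++ lam Y fun i => c (slots X + i) := by
  induction X generalizing c with
  | nil => simp [lam, slots]
  | cons A X ih => cases A <;> simp [lam, slots, ih, Nat.add_right_comm _ 1]

variable (s : List ℕ)

theorem tn_map_part (n : ℕ) : tn (s.map part) n = s := by
  induction s with
  | nil => rfl
  | cons a s ih => simp [tn, ih]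

theorem lam_map_part (c : ℕ → ℕ) : lam (s.map part) c = s := by
  induction s with
  | nil => rfl
  | cons a s ih => simp [lam, ih]

theorem slots_map_part : slots (s.map part) = 0 := by
  induction s with
  | nil => rfl
  | cons a s ih => simp [slots, ih]

end Render

theorem lam_cons_zero {A : Tok} (hA : A ≠ vslot) (T : List Tok) :
    lam (A :: T) 0 = A.base :: lam T 0 := by
  cases A with
  | part k => rfl
  | hslot d => rfl
  | vslot => exact absurd rfl hA

section Good

variable {A : Tok} {T : List Tok}

theorem Good.cons (hA : A ≠ vslot → 0 < A.base) (hAT : ∀ B ∈ T.head?, Compat A B)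
    (hT : Good T) : Good (A :: T) :=
  ⟨List.forall_mem_cons.2 ⟨hA, hT.pos⟩, List.isChain_cons.2 ⟨hAT, hT.chain⟩⟩

theorem Good.of_cons (h : Good (A :: T)) : Good T :=
  ⟨fun B hB => h.pos B (List.mem_cons_of_mem A hB), h.chain.tail⟩

theorem Good.append {X Y : List Tok} (hX : Good X) (hY : Good Y)
    (hXY : ∀ A ∈ X.getLast?, ∀ B ∈ Y.head?, Compat A B) : Good (X ++ Y) :=
  ⟨List.forall_mem_append.2 ⟨hX.pos, hY.pos⟩, List.isChain_append.2 ⟨hX.chain, hY.chain, hXY⟩⟩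

theorem good_map_part {s : List ℕ} (hs : ∀ a ∈ s, 0 < a) : Good (s.map part) :=
  ⟨by simpa using hs, List.isChain_map_of_isChain part (fun _ _ _ => ⟨nofun, nofun⟩)
    (List.Pairwise.isChain (List.pairwise_of_forall fun _ _ => trivial))⟩

theorem Good.drop_vslot (hA : A ≠ vslot) (h : Good (A :: vslot :: T)) : Good (A :: T) := by
  have hA2 : 2 ≤ A.base := (List.isChain_cons_cons.1 h.chain).1.2 rfl
  refine .cons (h.pos A List.mem_cons_self) (fun B _ => ⟨fun h => absurd h hA, fun _ => hA2⟩)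
    h.of_cons.of_cons

theorem Good.two_le_head_lam (h : Good (vslot :: T)) (c : ℕ → ℕ) :
    ∀ a ∈ (lam T c).head?, 2 ≤ a := by
  cases T with
  | nil => simp [lam]
  | cons B T =>
    have hB : 2 ≤ B.base := (List.isChain_cons_cons.1 h.chain).1.1 rfl
    cases B with
    | part k => simpa [lam] using hB
    | hslot d => simp only [base] at hB; simp [lam]; omega
    | vslot => simp at hB

theorem Good.isComposition_tn (h : Good T) {n : ℕ} (hn : 0 < n) : IsComposition (tn T n) := by
  induction T with
  | nil => exact fun _ h => nomatch h
  | cons A T ih =>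
    have hA := h.pos A List.mem_cons_self
    have ih := ih h.of_cons
    cases A with
    | part k => exact List.forall_mem_cons.2 ⟨hA nofun, ih⟩
    | hslot d => exact List.forall_mem_cons.2 ⟨hn, ih⟩
    | vslot => exact List.forall_mem_append.2 ⟨isComposition_replicate_one n, ih⟩

theorem Good.exists_embeds_lam_tn (h : Good T) (c : ℕ → ℕ) :
    ∃ N, ∀ n ≥ N, Embeds (lam T c) (tn T n) := by
  induction T generalizing c with
  | nil => exact ⟨0, fun _ _ => .nil⟩
  | cons A T ih =>
    have hA := h.pos A List.mem_cons_self
    cases A with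
    | part k =>
      obtain ⟨N, hN⟩ := ih h.of_cons c
      exact ⟨N, fun n hn => .cons ⟨hA nofun, le_rfl⟩ (hN n hn)⟩
    | hslot d =>
      obtain ⟨N, hN⟩ := ih h.of_cons fun i => c (i + 1)
      exact ⟨max N (d + c 0), fun n hn => .cons
        ⟨(hA nofun).trans_le (Nat.le_add_right d _), le_of_max_le_right hn⟩
        (hN n (le_of_max_le_left hn))⟩
    | vslot =>
      obtain ⟨N, hN⟩ := ih h.of_cons fun i => c (i + 1)
      exact ⟨max N (c 0), fun n hn =>
        (embeds_replicate_one (le_of_max_le_right hn)).append (hN n (le_of_max_le_left hn))⟩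

theorem Good.embeds_lam_zero (h : Good T) (c : ℕ → ℕ) : Embeds (lam T 0) (lam T c) := by
  induction T generalizing c with
  | nil => exact .nil
  | cons A T ih =>
    have hA := h.pos A List.mem_cons_self
    cases A with
    | part k => exact .cons ⟨hA nofun, le_rfl⟩ (ih h.of_cons c)
    | hslot d => exact .cons ⟨hA nofun, Nat.le_add_right d _⟩ (ih h.of_cons _)
    | vslot => exact (ih h.of_cons _).append_left _

theorem Good.not_embeds_lam_tn (hA : A ≠ vslot) (h : Good (A :: T)) {n : ℕ} :
    ¬ Embeds (lam (A :: T) 0) (tn T n) := by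
  induction T generalizing A with
  | nil => rw [lam_cons_zero hA]; exact not_embeds_cons_nil _
  | cons B T ih =>
    rw [lam_cons_zero hA]
    intro hAB
    cases B with
    | part k => exact ih (by simp) h.of_cons (Embeds.of_cons_cons hAB)
    | hslot d => exact ih (by simp) h.of_cons (Embeds.of_cons_cons hAB)
    | vslot =>
      have hA2 : 2 ≤ A.base := (List.isChain_cons_cons.1 h.chain).1.2 rfl
      refine ih hA (h.drop_vslot hA) ?_
      rw [lam_cons_zero hA]
      exact Embeds.of_replicate_one_append (by simpa using hA2) hAB

theorem Good.exists_cons_of_embeds (hA : A ≠ vslot) (h : Good (A :: T)) {l : List ℕ} {n r : ℕ}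
    (hl : Embeds l (r :: tn T n)) (h0 : Embeds (lam (A :: T) 0) l) :
    ∃ b l', l = b :: l' ∧ A.base ≤ b ∧ b ≤ r ∧ Embeds l' (tn T n) ∧ Embeds (lam T 0) l' := by
  have hne := h.not_embeds_lam_tn hA (n := n)
  rw [lam_cons_zero hA] at h0 hne
  rcases hl with _ | ⟨hbr, hl⟩ | hl
  · exact absurd h0 (not_embeds_cons_nil _)
  · rcases h0 with _ | ⟨hab, h0⟩ | h0
    · exact ⟨_, _, rfl, hab.2, hbr.2, hl, h0⟩
    · exact absurd (Embeds.trans h0 hl) hne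
  · exact absurd (h0.trans hl) hne

theorem Good.exists_eq_lam (h : Good T) {l : List ℕ} {n : ℕ} (hl : Embeds l (tn T n))
    (h0 : Embeds (lam T 0) l) : ∃ c : ℕ → ℕ, (∀ i, slots T ≤ i → c i = 0) ∧ l = lam T c := by
  induction T generalizing l with
  | nil => cases hl; exact ⟨0, fun _ _ => rfl, rfl⟩
  | cons A T ih =>
    cases A with
    | part k =>
      obtain ⟨b, l', rfl, hkb, hbk, hl', h0'⟩ := h.exists_cons_of_embeds (by simp) hl h0
      obtain ⟨c, hc, rfl⟩ := ih h.of_cons hl' h0'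
      exact ⟨c, hc, by rw [le_antisymm hbk hkb]; rfl⟩
    | hslot d =>
      obtain ⟨b, l', rfl, hdb, -, hl', h0'⟩ := h.exists_cons_of_embeds (by simp) hl h0
      obtain ⟨c, hc, rfl⟩ := ih h.of_cons hl' h0'
      refine ⟨fun | 0 => b - d | i + 1 => c i, ?_, ?_⟩
      · rintro (_ | i) hi <;> simp only [slots] at hi
        · omega
        · exact hc i (by omega)
      · simp only [base] at hdb
        simp [lam, Nat.add_sub_cancel' hdb]
    | vslot =>
      obtain ⟨j, l', rfl, hl'⟩ := exists_eq_replicate_one_append_of_embeds hl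
      obtain ⟨c, hc, rfl⟩ :=
        ih h.of_cons hl' (Embeds.of_replicate_one_append (h.two_le_head_lam 0) h0)
      refine ⟨fun | 0 => j | i + 1 => c i, ?_, rfl⟩
      rintro (_ | i) hi <;> simp only [slots] at hi
      · omega
      · exact hc i (by omega)

theorem Good.eq_of_lam_eq (h : Good T) {c c' : ℕ → ℕ} (hcc' : lam T c = lam T c') :
    ∀ i < slots T, c i = c' i := by
  induction T generalizing c c' with
  | nil => exact fun i hi => absurd hi (Nat.not_lt_zero i)
  | cons A T ih =>
    cases A with
    | part k => exact ih h.of_cons (List.cons_injective hcc')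
    | hslot d =>
      obtain ⟨h0, hcc'⟩ := List.cons_eq_cons.1 hcc'
      rintro (_ | i) hi
      · omega
      · exact ih h.of_cons hcc' i (by simpa [slots] using hi)
    | vslot =>
      obtain ⟨h0, hcc'⟩ :=
        replicate_one_append_inj (h.two_le_head_lam _) (h.two_le_head_lam _) hcc'
      rintro (_ | i) hi
      · exact h0
      · exact ih h.of_cons hcc' i (by simpa [slots] using hi)

end Good

end Tok

namespace UTilde

variable (u : UTilde)

def slotTok (i : ℕ) : Tok := if u.t i then .hslot (u.d i) else .vslot

def toks : ℕ → List Tok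
  | 0 => (u.sep 0).map .part
  | k + 1 => toks k ++ u.slotTok k :: (u.sep (k + 1)).map .part

theorem slots_toks (k : ℕ) : Tok.slots (u.toks k) = k := by
  induction k with
  | zero => exact Tok.slots_map_part _
  | succ k ih =>
    rw [toks, Tok.slots_append, ih, slotTok]
    split <;> simp [Tok.slots, Tok.slots_map_part]

theorem tn_toks (k n : ℕ) : Tok.tn (u.toks k) n = u.sep 0 ++
    (List.ofFn fun i : Fin k =>
      (if u.t i then [n] else List.replicate n 1) ++ u.sep (i + 1)).flatten := by
  induction k with
  | zero => simp [toks, Tok.tn_map_part]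
  | succ k ih =>
    rw [toks, Tok.tn_append, ih, List.ofFn_succ', List.concat_eq_append, List.flatten_append,
      slotTok]
    split <;> simp [Tok.tn, Tok.tn_map_part, *]

theorem lam_toks (k : ℕ) (c : ℕ → ℕ) : Tok.lam (u.toks k) c = u.sep 0 ++
    (List.ofFn fun i : Fin k =>
      (if u.t i then [u.d i + c i] else List.replicate (c i) 1) ++ u.sep (i + 1)).flatten := by
  induction k with
  | zero => simp [toks, Tok.lam_map_part]
  | succ k ih =>
    rw [toks, Tok.lam_append, ih, slots_toks, List.ofFn_succ', List.concat_eq_append,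
      List.flatten_append, slotTok]
    split <;> simp [Tok.lam, Tok.lam_map_part, *]

theorem d_eq_two {i : ℕ} (h : u.adj i) : u.d i = 2 := if_pos h

theorem d_pos (i : ℕ) : 0 < u.d i := by
  unfold d; split <;> omega

theorem compat_slotTok_slotTok {j : ℕ} (hj : j + 1 < u.m) (hs : u.sep (j + 1) = []) :
    Tok.Compat (u.slotTok j) (u.slotTok (j + 1)) := by
  unfold slotTok
  cases htj : u.t j <;> cases htj' : u.t (j + 1)
  · exact absurd hs (u.vv j hj htj htj')
  · simp [u.d_eq_two (Or.inl ⟨j.succ_pos, htj, hs⟩), Tok.Compat]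
  · simp [u.d_eq_two (Or.inr ⟨hj, htj', hs⟩), Tok.Compat]
  · simp [Tok.Compat]

theorem compat_getLast?_toks {k : ℕ} (hk : k < u.m) :
    ∀ A ∈ (u.toks k).getLast?, Tok.Compat A (u.slotTok k) := by
  by_cases hs : u.sep k = []
  · cases k with
    | zero => simp [toks, hs]
    | succ j => simpa [toks, hs] using u.compat_slotTok_slotTok hk hs
  · obtain ⟨s, a, hsa⟩ := (List.eq_nil_or_concat (u.sep k)).resolve_left hs
    have hlast : (u.toks k).getLast? = some (.part a) := by
      cases k <;> simp [toks, hsa, List.getLast?_cons]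
    rw [hlast]
    rintro _ ⟨⟩
    refine ⟨nofun, fun hv => ?_⟩
    simpa [hsa] using u.v_left k hk (by simpa [slotTok] using hv) hs

theorem good_toks {k : ℕ} (hk : k ≤ u.m) : Tok.Good (u.toks k) := by
  induction k with
  | zero => exact Tok.good_map_part (u.sep_pos 0 hk)
  | succ k ih =>
    refine (ih (by omega)).append (.cons ?_ ?_ (Tok.good_map_part (u.sep_pos (k + 1) hk)))
      ?_
    · unfold slotTok; split <;> simp [u.d_pos]
    · intro B hB
      rw [List.head?_map] at hB
      obtain ⟨a, ha, rfl⟩ := Option.mem_map.1 hB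
      refine ⟨fun hv => ?_, nofun⟩
      have hne := List.ne_nil_of_mem (List.mem_of_mem_head? ha)
      simpa [List.headD_eq_head?_getD, Option.mem_def.1 ha] using
        u.v_right k hk (by simpa [slotTok] using hv) hne
    · rintro A hA _ ⟨⟩
      exact u.compat_getLast?_toks (by omega) A hA

end UTilde

theorem UTilde.gkMem_iff (u : UTilde) {l : List ℕ} :
    u.GKmem l ↔ ∃ n, 1 ≤ n ∧ Embeds l (Tok.tn (u.toks u.m) n) := by
  refine exists_congr fun n => and_congr_right fun hn => ?_
  rw [show u.tn n = Tok.tn (u.toks u.m) n from (u.tn_toks u.m n).symm]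
  exact reflTransGen_rel_iff_embeds ((u.good_toks le_rfl).isComposition_tn hn)

/-- `(a,b) ↦ λ(a,b)` is injective, with image `{λ ∈ GK_ũ : λ ≥ λ_ũ}`. -/
theorem lam_injective_image (u : UTilde) :
    (∀ c c' : ℕ → ℕ, (∀ i, u.m ≤ i → c i = 0) → (∀ i, u.m ≤ i → c' i = 0) →
      u.lam c = u.lam c' → c = c') ∧
    (∀ l : List ℕ,
      (∃ c : ℕ → ℕ, (∀ i, u.m ≤ i → c i = 0) ∧ l = u.lam c) ↔
        (u.GKmem l ∧ Relation.ReflTransGen Rel u.lam0 l)) := by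
  have hT := u.good_toks le_rfl
  have hlam (c : ℕ → ℕ) : u.lam c = Tok.lam (u.toks u.m) c := (u.lam_toks u.m c).symm
  refine ⟨fun c c' hc hc' h => funext fun i => ?_, fun l => ⟨?_, ?_⟩⟩
  · rcases lt_or_ge i u.m with hi | hi
    · rw [hlam, hlam] at h
      exact hT.eq_of_lam_eq h i (by rwa [u.slots_toks])
    · rw [hc i hi, hc' i hi]
  · rintro ⟨c, -, rfl⟩
    obtain ⟨N, hN⟩ := hT.exists_embeds_lam_tn c
    have hc := hN (max N 1) (le_max_left _ _)
    refine ⟨u.gkMem_iff.2 ⟨_, le_max_right _ _, by rwa [hlam]⟩, ?_⟩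
    rw [reflTransGen_rel_iff_embeds (hlam c ▸ hc.isComposition), UTilde.lam0, hlam, hlam]
    exact hT.embeds_lam_zero c
  · rintro ⟨hl, h0⟩
    obtain ⟨n, -, hl⟩ := u.gkMem_iff.1 hl
    rw [reflTransGen_rel_iff_embeds hl.isComposition, UTilde.lam0, hlam] at h0
    obtain ⟨c, hc, rfl⟩ := hT.exists_eq_lam hl h0
    exact ⟨c, by rwa [u.slots_toks] at hc, (hlam c).symm⟩

end GK
end

section
/- If φ is a semifinite harmonic function on the Gnedin–Kingman graph GK, then there exists a composition λ with φ(λ) = +∞, and for every composition λ with φ(λ) = +∞ there exists a composition μ > λ with 0 < φ(μ) < +∞. -/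
open scoped ENNReal NNReal

namespace GK


section Aux

lemma sum_set_aux (l : List ℕ) (p a : ℕ) (hp : p < l.length) :
    (l.set p a).sum + l.getD p 0 = l.sum + a := by
  induction l generalizing p with
  | nil => simp at hp
  | cons h t ih =>
    cases p with
    | zero => simp; omega
    | succ p =>
      simp only [List.set, List.sum_cons, List.getD_cons_succ]
      have := ih p (by simpa using hp)
      omega

lemma sum_eraseIdx_aux (l : List ℕ) (p : ℕ) (hp : p < l.length) :
    (l.eraseIdx p).sum + l.getD p 0 = l.sum := by
  induction l generalizing p with
  | nil => simp at hp
  | cons h t ih =>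
    cases p with
    | zero => simp [List.eraseIdx]; omega
    | succ p =>
      simp only [List.eraseIdx, List.sum_cons, List.getD_cons_succ]
      have := ih p (by simpa using hp)
      omega

lemma getD_pos {l : List ℕ} (hc : IsComposition l) {p : ℕ} (hp : p < l.length) :
    0 < l.getD p 0 := by
  rw [List.getD_eq_getElem l 0 hp]
  exact hc _ (List.getElem_mem hp)

lemma stepAt_sum {l : List ℕ} (hc : IsComposition l) {p : ℕ} (hp : p < l.length) :
    (stepAt l p).sum + 1 = l.sum := by
  have hpos := getD_pos hc hp
  unfold stepAt
  split
  · have := sum_set_aux l p (l.getD p 0 - 1) hp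
    omega
  · have := sum_eraseIdx_aux l p hp
    omega

lemma stepAt_comp {l : List ℕ} (hc : IsComposition l) {p : ℕ} (hp : p < l.length) :
    IsComposition (stepAt l p) := by
  unfold stepAt
  split
  · intro n hn
    rcases List.mem_or_eq_of_mem_set hn with h | h
    · exact hc n h
    · omega
  · intro n hn
    exact hc n ((List.eraseIdx_sublist l p).mem hn)

lemma kappa_ne_zero_iff {ν μ : List ℕ} :
    kappa ν μ ≠ 0 ↔ ∃ p, p < μ.length ∧ stepAt μ p = ν := by
  unfold kappa
  rw [← Nat.pos_iff_ne_zero, Finset.card_pos]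
  constructor
  · rintro ⟨p, hp⟩
    rw [Finset.mem_filter, Finset.mem_range] at hp
    exact ⟨p, hp.1, hp.2⟩
  · rintro ⟨p, hp1, hp2⟩
    exact ⟨p, Finset.mem_filter.2 ⟨Finset.mem_range.2 hp1, hp2⟩⟩

lemma kappa_sum {ν μ : List ℕ} (hμ : IsComposition μ) (h : kappa ν μ ≠ 0) :
    ν.sum + 1 = μ.sum := by
  obtain ⟨p, hp, rfl⟩ := kappa_ne_zero_iff.1 h
  exact stepAt_sum hμ hp

lemma rel_of_stepAt {μ : List ℕ} {p : ℕ} (hp : p < μ.length) :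
    Rel (stepAt μ p) μ := by
  rw [Rel, Nat.pos_iff_ne_zero]
  exact kappa_ne_zero_iff.2 ⟨p, hp, rfl⟩

/-- Number of paths of length `k` from `ν` up to `μ` (counted with κ-multiplicities). -/
def npaths : ℕ → List ℕ → List ℕ → ℕ
  | 0, ν, μ => if ν = μ then 1 else 0
  | (k+1), ν, μ => ∑ p ∈ Finset.range μ.length, npaths k ν (stepAt μ p)

lemma npaths_sum {k : ℕ} : ∀ {ν μ : List ℕ}, IsComposition μ → npaths k ν μ ≠ 0 →
    ν.sum + k = μ.sum := by
  induction k with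
  | zero =>
    intro ν μ _ h
    simp only [npaths] at h
    split at h
    · next heq => rw [heq]; omega
    · simp at h
  | succ k ih =>
    intro ν μ hμ h
    simp only [npaths] at h
    obtain ⟨p, hp, hne⟩ := Finset.exists_ne_zero_of_sum_ne_zero h
    rw [Finset.mem_range] at hp
    have h1 := ih (stepAt_comp hμ hp) hne
    have h2 := stepAt_sum hμ hp
    omega

lemma npaths_transGen {k : ℕ} : ∀ {ν μ : List ℕ}, IsComposition μ →
    npaths (k+1) ν μ ≠ 0 → Relation.TransGen Rel ν μ := by
  induction k with
  | zero =>
    intro ν μ _ h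
    simp only [npaths] at h
    obtain ⟨p, hp, hne⟩ := Finset.exists_ne_zero_of_sum_ne_zero h
    rw [Finset.mem_range] at hp
    have : ν = stepAt μ p := by by_contra hne'; simp [hne'] at hne
    exact Relation.TransGen.single (this ▸ rel_of_stepAt hp)
  | succ k ih =>
    intro ν μ hμ h
    rw [show k + 1 + 1 = (k+1) + 1 from rfl] at h
    simp only [npaths] at h
    obtain ⟨p, hp, hne⟩ := Finset.exists_ne_zero_of_sum_ne_zero h
    rw [Finset.mem_range] at hp
    exact Relation.TransGen.tail (ih (stepAt_comp hμ hp) hne) (rel_of_stepAt hp)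

lemma npaths_one {ν : List ℕ} (μ : List ℕ) : npaths 1 ν μ = kappa ν μ := by
  simp only [npaths, kappa, Finset.card_filter]
  refine Finset.sum_congr rfl fun p _ => ?_
  by_cases h : stepAt μ p = ν
  · simp [h]
  · rw [if_neg (fun h' => h h'.symm), if_neg h]

/-- First-step decomposition of path counts, over any sufficiently large finite set. -/
lemma npaths_succ_eq (k : ℕ) : ∀ (μ : Comp) (ν : List ℕ) (F : Finset Comp),
    (∀ μ' : Comp, kappa ν μ'.1 ≠ 0 → npaths k μ'.1 μ.1 ≠ 0 → μ' ∈ F) →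
    npaths (k+1) ν μ.1 = ∑ μ' ∈ F, kappa ν μ'.1 * npaths k μ'.1 μ.1 := by
  induction k with
  | zero =>
    intro μ ν F hF
    have hterm : ∀ μ' ∈ F, kappa ν μ'.1 * npaths 0 μ'.1 μ.1
        = if μ' = μ then kappa ν μ'.1 else 0 := by
      intro μ' _
      simp only [npaths]
      by_cases h : μ' = μ
      · simp [h]
      · have : μ'.1 ≠ μ.1 := fun hh => h (Subtype.ext hh)
        simp [this, h]
    rw [Finset.sum_congr rfl hterm, Finset.sum_ite_eq' F μ fun μ' => kappa ν μ'.1]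
    rw [npaths_one]
    by_cases h : μ ∈ F
    · rw [if_pos h]
    · rw [if_neg h]
      by_contra hk
      exact h (hF μ (fun hh => hk (by rw [hh])) (by simp [npaths]))
  | succ k ih =>
    intro μ ν F hF
    show ∑ p ∈ Finset.range μ.1.length, npaths (k+1) ν (stepAt μ.1 p) = _
    have hstep : ∀ p ∈ Finset.range μ.1.length,
        npaths (k+1) ν (stepAt μ.1 p)
          = ∑ μ' ∈ F, kappa ν μ'.1 * npaths k μ'.1 (stepAt μ.1 p) := by
      intro p hp
      rw [Finset.mem_range] at hp
      refine ih ⟨stepAt μ.1 p, stepAt_comp μ.2 hp⟩ ν F fun μ' h1 h2 => hF μ' h1 ?_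
      show npaths (k+1) μ'.1 μ.1 ≠ 0
      simp only [npaths]
      intro hz
      rw [Finset.sum_eq_zero_iff] at hz
      exact h2 (hz p (Finset.mem_range.2 hp))
    rw [Finset.sum_congr rfl hstep, Finset.sum_comm]
    refine Finset.sum_congr rfl fun μ' _ => ?_
    rw [← Finset.mul_sum]
    rfl

lemma kap_tsum (c : List ℕ → ℝ≥0∞) (ρ : Comp) :
    ∑' μ : Comp, c μ.1 * (kappa μ.1 ρ.1 : ℝ≥0∞)
      = ∑ p ∈ Finset.range ρ.1.length, c (stepAt ρ.1 p) := by
  have hterm : ∀ μ : Comp, c μ.1 * (kappa μ.1 ρ.1 : ℝ≥0∞)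
      = ∑ p ∈ Finset.range ρ.1.length, (if stepAt ρ.1 p = μ.1 then c μ.1 else 0) := by
    intro μ
    rw [kappa, Finset.card_filter, Nat.cast_sum, Finset.mul_sum]
    refine Finset.sum_congr rfl fun p _ => ?_
    by_cases h : stepAt ρ.1 p = μ.1 <;> simp [h]
  rw [tsum_congr hterm, Summable.tsum_finsetSum fun p _ => ENNReal.summable]
  refine Finset.sum_congr rfl fun p hp => ?_
  rw [Finset.mem_range] at hp
  rw [tsum_eq_single (⟨stepAt ρ.1 p, stepAt_comp ρ.2 hp⟩ : Comp)
    (fun μ hne => if_neg fun h => hne (Subtype.ext h.symm))]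
  exact if_pos rfl

lemma inner_swap (φ : Comp → ℝ≥0∞) (h1 : HarmonicE φ) (c : List ℕ → ℝ≥0∞) :
    ∑' μ : Comp, c μ.1 * φ μ
      = ∑' ρ : Comp, (∑ p ∈ Finset.range ρ.1.length, c (stepAt ρ.1 p)) * φ ρ := by
  calc ∑' μ : Comp, c μ.1 * φ μ
      = ∑' μ : Comp, ∑' ρ : Comp, c μ.1 * ((kappa μ.1 ρ.1 : ℝ≥0∞) * φ ρ) := by
        refine tsum_congr fun μ => ?_
        rw [ENNReal.tsum_mul_left, ← h1 μ]
    _ = ∑' ρ : Comp, ∑' μ : Comp, c μ.1 * ((kappa μ.1 ρ.1 : ℝ≥0∞) * φ ρ) := ENNReal.tsum_comm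
    _ = ∑' ρ : Comp, (∑' μ : Comp, c μ.1 * (kappa μ.1 ρ.1 : ℝ≥0∞)) * φ ρ := by
        refine tsum_congr fun ρ => ?_
        rw [← ENNReal.tsum_mul_right]
        exact tsum_congr fun μ => (mul_assoc _ _ _).symm
    _ = ∑' ρ : Comp, (∑ p ∈ Finset.range ρ.1.length, c (stepAt ρ.1 p)) * φ ρ := by
        exact tsum_congr fun ρ => by rw [kap_tsum]

lemma harmonic_iter (φ : Comp → ℝ≥0∞) (h1 : HarmonicE φ) (k : ℕ) (ν : Comp) :
    φ ν = ∑' μ : Comp, (npaths k ν.1 μ.1 : ℝ≥0∞) * φ μ := by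
  induction k with
  | zero =>
    rw [tsum_eq_single ν (fun μ hne => by
      have : ν.1 ≠ μ.1 := fun h => hne.symm (Subtype.ext h)
      simp [npaths, this])]
    simp [npaths]
  | succ k ih =>
    calc φ ν = ∑' μ : Comp, (npaths k ν.1 μ.1 : ℝ≥0∞) * φ μ := ih
      _ = ∑' ρ : Comp, (∑ p ∈ Finset.range ρ.1.length,
            (npaths k ν.1 (stepAt ρ.1 p) : ℝ≥0∞)) * φ ρ :=
          inner_swap φ h1 fun L => (npaths k ν.1 L : ℝ≥0∞)
      _ = ∑' ρ : Comp, (npaths (k+1) ν.1 ρ.1 : ℝ≥0∞) * φ ρ := by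
          refine tsum_congr fun ρ => ?_
          congr 1
          rw [show npaths (k+1) ν.1 ρ.1
            = ∑ p ∈ Finset.range ρ.1.length, npaths k ν.1 (stepAt ρ.1 p) from rfl]
          rw [Nat.cast_sum]

/-- Number of paths from `ν` up to `μ` (all the way, according to the grading). -/
def pushCoeff (ν μ : List ℕ) : ℕ :=
  if ν.sum ≤ μ.sum then npaths (μ.sum - ν.sum) ν μ else 0

/-- The push of a finitely supported vector to level vectors. -/
noncomputable def Pu (w : V) (μ : Comp) : ℝ :=
  w.sum fun ν c => c * (pushCoeff ν.1 μ.1 : ℝ)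

lemma Pu_eq_sum (w : V) (μ : Comp) (F : Finset Comp) (hF : w.support ⊆ F) :
    Pu w μ = ∑ ν ∈ F, w ν * (pushCoeff ν.1 μ.1 : ℝ) :=
  Finsupp.sum_of_support_subset w hF _ fun i _ => zero_mul _

lemma Pu_add (w₁ w₂ : V) (μ : Comp) : Pu (w₁ + w₂) μ = Pu w₁ μ + Pu w₂ μ :=
  Finsupp.sum_add_index' (fun _ => zero_mul _) fun _ b₁ b₂ => add_mul b₁ b₂ _

lemma Pu_zero (μ : Comp) : Pu 0 μ = 0 :=
  Finsupp.sum_zero_index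

lemma Pu_smul (c : ℝ) (w : V) (μ : Comp) : Pu (c • w) μ = c * Pu w μ := by
  have h0 := Finsupp.sum_smul_index (g := w) (b := c)
    (h := fun (ν : Comp) (a : ℝ) => a * (pushCoeff ν.1 μ.1 : ℝ)) (fun _ => zero_mul _)
  rw [Pu, h0, Pu, Finsupp.mul_sum]
  exact Finsupp.sum_congr fun ν _ => mul_assoc _ _ _

lemma Pu_single (l : Comp) (μ : Comp) :
    Pu (Finsupp.single l (1:ℝ)) μ = (pushCoeff l.1 μ.1 : ℝ) := by
  have h0 := Finsupp.sum_single_index (a := l) (b := (1:ℝ))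
    (h := fun (ν : Comp) (a : ℝ) => a * (pushCoeff ν.1 μ.1 : ℝ)) (zero_mul _)
  rw [Pu, h0]
  simp

lemma Pu_nonneg {w : V} (hw : ∀ ν, 0 ≤ w ν) (μ : Comp) : 0 ≤ Pu w μ :=
  Finset.sum_nonneg fun ν _ => mul_nonneg (hw ν) (Nat.cast_nonneg _)

lemma Pu_gen (l : Comp) (x : V)
    (hx : ∀ μ : Comp, x μ = (if μ = l then 1 else 0) - (kappa l.1 μ.1 : ℝ))
    (μ : Comp) (hμ : l.1.sum < μ.1.sum) : Pu x μ = 0 := by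
  classical
  set F : Finset Comp := insert l x.support with hFdef
  rw [Pu_eq_sum x μ F (by rw [hFdef]; exact Finset.subset_insert _ _)]
  have hterm : ∀ ν ∈ F, x ν * (pushCoeff ν.1 μ.1 : ℝ)
      = (if ν = l then (pushCoeff l.1 μ.1 : ℝ) else 0)
        - (kappa l.1 ν.1 : ℝ) * (pushCoeff ν.1 μ.1 : ℝ) := by
    intro ν _
    rw [hx ν, sub_mul]
    congr 1
    by_cases h : ν = l
    · rw [if_pos h, if_pos h, one_mul, h]
    · rw [if_neg h, if_neg h, zero_mul]
  rw [Finset.sum_congr rfl hterm, Finset.sum_sub_distrib,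
    Finset.sum_ite_eq' F l fun _ => (pushCoeff l.1 μ.1 : ℝ),
    if_pos (Finset.mem_insert_self l _)]
  have key : (∑ ν ∈ F, (kappa l.1 ν.1 : ℝ) * (pushCoeff ν.1 μ.1 : ℝ))
      = (pushCoeff l.1 μ.1 : ℝ) := by
    set k := μ.1.sum - l.1.sum - 1 with hk
    have hF2 : ∀ μ' : Comp, kappa l.1 μ'.1 ≠ 0 → npaths k μ'.1 μ.1 ≠ 0 → μ' ∈ F := by
      intro μ' h1 _
      by_cases h : μ' = l
      · rw [h]; exact Finset.mem_insert_self _ _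
      · refine Finset.mem_insert_of_mem (Finsupp.mem_support_iff.2 ?_)
        rw [hx μ', if_neg h]
        intro hc
        apply h1
        have : (kappa l.1 μ'.1 : ℝ) = 0 := by linarith
        exact_mod_cast this
    have hnp := npaths_succ_eq k μ l.1 F hF2
    have h1 : pushCoeff l.1 μ.1 = npaths (k+1) l.1 μ.1 := by
      rw [pushCoeff, if_pos (le_of_lt hμ)]
      congr 1
      omega
    have h2 : ∀ ν ∈ F, (kappa l.1 ν.1 : ℝ) * (pushCoeff ν.1 μ.1 : ℝ)
        = ((kappa l.1 ν.1 * npaths k ν.1 μ.1 : ℕ) : ℝ) := by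
      intro ν _
      by_cases hkz : kappa l.1 ν.1 = 0
      · simp [hkz]
      · have hs := kappa_sum ν.2 hkz
        have hle : ν.1.sum ≤ μ.1.sum := by omega
        rw [pushCoeff, if_pos hle]
        have : μ.1.sum - ν.1.sum = k := by omega
        rw [this]
        push_cast
        ring
    rw [Finset.sum_congr rfl h2, ← Nat.cast_sum, ← hnp, h1]
  rw [key, sub_self]

lemma Pu_W {w : V} (hw : w ∈ Wsub) :
    ∃ B : ℕ, ∀ μ : Comp, B < μ.1.sum → Pu w μ = 0 := by
  refine Submodule.span_induction ?_ ?_ ?_ ?_ hw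
  · rintro x ⟨l, hl⟩
    exact ⟨l.1.sum, fun μ hμ => Pu_gen l x hl μ hμ⟩
  · exact ⟨0, fun μ _ => Pu_zero μ⟩
  · rintro x y _ _ ⟨B₁, h₁⟩ ⟨B₂, h₂⟩
    exact ⟨max B₁ B₂, fun μ hμ => by
      rw [Pu_add, h₁ μ (lt_of_le_of_lt (le_max_left _ _) hμ),
        h₂ μ (lt_of_le_of_lt (le_max_right _ _) hμ), add_zero]⟩
  · rintro c x _ ⟨B, h⟩
    exact ⟨B, fun μ hμ => by rw [Pu_smul, h μ hμ, mul_zero]⟩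

lemma FphiV_zero (φ : Comp → ℝ≥0∞) : FphiV φ 0 = 0 := by
  simp [FphiV]

lemma FphiV_single (φ : Comp → ℝ≥0∞) (l : Comp) :
    FphiV φ (Finsupp.single l (1:ℝ)) = φ l := by
  rw [FphiV, tsum_eq_single l (fun μ hne => by
    rw [Finsupp.single_apply, if_neg (fun h => hne h.symm), ENNReal.ofReal_zero, zero_mul])]
  rw [Finsupp.single_apply, if_pos rfl, ENNReal.ofReal_one, one_mul]

lemma FphiV_eq_level (φ : Comp → ℝ≥0∞) (h1 : HarmonicE φ) (x : V)
    (hx : ∀ μ, 0 ≤ x μ) (N : ℕ) (hN : ∀ ν ∈ x.support, ν.1.sum ≤ N) :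
    FphiV φ x = ∑' μ : Comp,
      (if μ.1.sum = N then ENNReal.ofReal (Pu x μ) * φ μ else 0) := by
  calc FphiV φ x = ∑ ν ∈ x.support, ENNReal.ofReal (x ν) * φ ν := by
        refine tsum_eq_sum fun ν hν => ?_
        rw [Finsupp.notMem_support_iff.1 hν, ENNReal.ofReal_zero, zero_mul]
    _ = ∑ ν ∈ x.support, ∑' μ : Comp,
          ENNReal.ofReal (x ν) * ((npaths (N - ν.1.sum) ν.1 μ.1 : ℝ≥0∞) * φ μ) := by
        refine Finset.sum_congr rfl fun ν _ => ?_
        rw [ENNReal.tsum_mul_left, ← harmonic_iter φ h1 (N - ν.1.sum) ν]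
    _ = ∑' μ : Comp, ∑ ν ∈ x.support,
          ENNReal.ofReal (x ν) * ((npaths (N - ν.1.sum) ν.1 μ.1 : ℝ≥0∞) * φ μ) :=
        (Summable.tsum_finsetSum fun ν _ => ENNReal.summable).symm
    _ = ∑' μ : Comp, (if μ.1.sum = N then ENNReal.ofReal (Pu x μ) * φ μ else 0) := by
        refine tsum_congr fun μ => ?_
        by_cases hμN : μ.1.sum = N
        · rw [if_pos hμN, Pu_eq_sum x μ x.support le_rfl,
            ENNReal.ofReal_sum_of_nonneg fun ν _ => mul_nonneg (hx ν) (Nat.cast_nonneg _),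
            Finset.sum_mul]
          refine Finset.sum_congr rfl fun ν hν => ?_
          rw [ENNReal.ofReal_mul (hx ν), ENNReal.ofReal_natCast]
          have hpc : pushCoeff ν.1 μ.1 = npaths (N - ν.1.sum) ν.1 μ.1 := by
            rw [pushCoeff, if_pos (hμN ▸ hN ν hν), hμN]
          rw [hpc, mul_assoc]
        · rw [if_neg hμN]
          refine Finset.sum_eq_zero fun ν hν => ?_
          have hz : npaths (N - ν.1.sum) ν.1 μ.1 = 0 := by
            by_contra h
            have := npaths_sum μ.2 h
            have := hN ν hν
            omega
          rw [hz]
          simp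

/-- Main structural lemma: if `x + z` is a nonnegative representative of `[e_l]`, then
`F(x) + F(z) = φ(l)`, and if `F(x)` is finite positive, there is a vertex above `l`
with finite positive value of `φ`. -/
lemma main_lemma (φ : Comp → ℝ≥0∞) (h1 : HarmonicE φ) (l : Comp) (x z : V)
    (hx : ∀ μ, 0 ≤ x μ) (hz : ∀ μ, 0 ≤ z μ)
    (hw : Finsupp.single l (1:ℝ) - (x + z) ∈ Wsub) :
    FphiV φ x + FphiV φ z = φ l ∧
    (FphiV φ x ≠ 0 → FphiV φ x ≠ ⊤ →
      ∃ μ : Comp, Relation.TransGen Rel l.1 μ.1 ∧ 0 < φ μ ∧ φ μ < ⊤) := by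
  classical
  obtain ⟨B, hB⟩ := Pu_W hw
  set M1 := x.support.sup fun ν : Comp => ν.1.sum with hM1
  set M2 := z.support.sup fun ν : Comp => ν.1.sum with hM2
  set N := B + l.1.sum + M1 + M2 + 1 with hNdef
  have hNl : l.1.sum < N := by omega
  have hNB : B < N := by omega
  have hNx : ∀ ν ∈ x.support, ν.1.sum ≤ N := fun ν h =>
    le_trans (Finset.le_sup (f := fun ν : Comp => ν.1.sum) h) (by omega)
  have hNz : ∀ ν ∈ z.support, ν.1.sum ≤ N := fun ν h =>
    le_trans (Finset.le_sup (f := fun ν : Comp => ν.1.sum) h) (by omega)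
  have hNs : ∀ ν ∈ (Finsupp.single l (1:ℝ)).support, ν.1.sum ≤ N := by
    intro ν h
    have := Finsupp.support_single_subset h
    rw [Finset.mem_singleton] at this
    rw [this]
    omega
  have hlev : ∀ μ : Comp, μ.1.sum = N → Pu x μ + Pu z μ = (pushCoeff l.1 μ.1 : ℝ) := by
    intro μ hμ
    have h0 : Pu (Finsupp.single l (1:ℝ) - (x + z)) μ = 0 := hB μ (by omega)
    have hdecomp : Finsupp.single l (1:ℝ)
        = (x + z) + (Finsupp.single l (1:ℝ) - (x + z)) := by abel
    have := Pu_single l μ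
    rw [hdecomp, Pu_add, Pu_add, h0, add_zero] at this
    linarith [this]
  have hEx := FphiV_eq_level φ h1 x hx N hNx
  have hEz := FphiV_eq_level φ h1 z hz N hNz
  have hsnn : ∀ μ : Comp, 0 ≤ (Finsupp.single l (1:ℝ)) μ := by
    intro μ
    rw [Finsupp.single_apply]
    split <;> norm_num
  have hEs := FphiV_eq_level φ h1 (Finsupp.single l (1:ℝ)) hsnn N hNs
  constructor
  · rw [hEx, hEz, ← ENNReal.tsum_add, ← FphiV_single φ l, hEs]
    refine tsum_congr fun μ => ?_
    by_cases h : μ.1.sum = N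
    · rw [if_pos h, if_pos h, if_pos h, ← add_mul,
        ← ENNReal.ofReal_add (Pu_nonneg hx μ) (Pu_nonneg hz μ), hlev μ h, Pu_single]
    · rw [if_neg h, if_neg h, if_neg h, add_zero]
  · intro hne htop
    rw [hEx] at hne htop
    have : ∃ μ : Comp, (if μ.1.sum = N then ENNReal.ofReal (Pu x μ) * φ μ else 0) ≠ 0 := by
      by_contra hc
      push_neg at hc
      exact hne (by rw [ENNReal.tsum_eq_zero.2 hc])
    obtain ⟨μ, hμ⟩ := this
    have hμN : μ.1.sum = N := by
      by_contra h
      exact hμ (if_neg h)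
    rw [if_pos hμN] at hμ
    have hPu : ENNReal.ofReal (Pu x μ) ≠ 0 := fun h => hμ (by rw [h, zero_mul])
    have hφ0 : φ μ ≠ 0 := fun h => hμ (by rw [h, mul_zero])
    have hPupos : 0 < Pu x μ := by
      rcases lt_or_ge 0 (Pu x μ) with h | h
      · exact h
      · exact absurd (ENNReal.ofReal_eq_zero.2 h) hPu
    have hφtop : φ μ < ⊤ := by
      by_contra h
      rw [not_lt, top_le_iff] at h
      have hle := ENNReal.le_tsum (f := fun μ : Comp =>
        if μ.1.sum = N then ENNReal.ofReal (Pu x μ) * φ μ else 0) μ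
      rw [if_pos hμN, h, ENNReal.mul_top hPu] at hle
      exact htop (top_le_iff.1 hle)
    refine ⟨μ, ?_, pos_iff_ne_zero.2 hφ0, hφtop⟩
    have hpc : (pushCoeff l.1 μ.1 : ℝ) > 0 := by
      have := hlev μ hμN
      have := Pu_nonneg hz μ
      linarith
    have hpcnz : pushCoeff l.1 μ.1 ≠ 0 := by
      intro h
      rw [h] at hpc
      norm_num at hpc
    rw [pushCoeff, if_pos (show l.1.sum ≤ μ.1.sum by omega)] at hpcnz
    have hk : μ.1.sum - l.1.sum = (μ.1.sum - l.1.sum - 1) + 1 := by omega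
    rw [hk] at hpcnz
    exact npaths_transGen μ.2 hpcnz

end Aux

/-- a semifinite harmonic function takes the value `+∞` somewhere, and above
any vertex with value `+∞` there is a vertex with value in `(0,∞)`. -/
theorem semifinite_top_structure (φ : Comp → ℝ≥0∞) (h1 : HarmonicE φ) (h2 : Semifinite φ) :
    (∃ l : Comp, φ l = ⊤) ∧
    ∀ l : Comp, φ l = ⊤ →
      ∃ μ : Comp, Relation.TransGen Rel l.1 μ.1 ∧ 0 < φ μ ∧ φ μ < ⊤ := by
  classical
  constructor
  · rcases not_forall.1 h2.1 with ⟨l, hl⟩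
    exact ⟨l, top_le_iff.1 (not_lt.1 hl)⟩
  · intro l hl
    set a : Rq := Submodule.Quotient.mk (Finsupp.single l (1:ℝ)) with ha_def
    have hsnn : ∀ μ : Comp, 0 ≤ (Finsupp.single l (1:ℝ)) μ := by
      intro μ
      rw [Finsupp.single_apply]
      split <;> norm_num
    have ha : a ∈ Kcone := ⟨Finsupp.single l 1, hsnn, rfl⟩
    have hFa : Fphi φ a = ⊤ := by
      rw [Fphi, dif_pos ha]
      obtain ⟨hpos, hmk⟩ := ha.choose_spec
      have hW : Finsupp.single l (1:ℝ) - (ha.choose + 0) ∈ Wsub := by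
        rw [add_zero]
        have hmem := (Submodule.Quotient.eq Wsub).1 (hmk.trans ha_def)
        have := Submodule.neg_mem Wsub hmem
        rwa [neg_sub] at this
      have hmain := (main_lemma φ h1 l ha.choose 0 hpos (fun _ => le_refl 0) hW).1
      rw [FphiV_zero, add_zero] at hmain
      rw [hmain, hl]
    have hsup := h2.2 a ha
    rw [hFa] at hsup
    have hlt : (0:ℝ≥0∞) <
        sSup {y | ∃ b ∈ Kcone, a - b ∈ Kcone ∧ Fphi φ b < ⊤ ∧ y = Fphi φ b} := by
      rw [← hsup]
      exact ENNReal.zero_lt_top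
    obtain ⟨y, hyS, hy0⟩ := lt_sSup_iff.1 hlt
    obtain ⟨b, hb, hab, hbtop, rfl⟩ := hyS
    obtain ⟨hxb, hmkb⟩ := hb.choose_spec
    obtain ⟨hzb, hmkz⟩ := hab.choose_spec
    have hFb : Fphi φ b = FphiV φ hb.choose := by rw [Fphi, dif_pos hb]
    have hW : Finsupp.single l (1:ℝ) - (hb.choose + hab.choose) ∈ Wsub := by
      have hmk2 : Submodule.Quotient.mk (p := Wsub) (hb.choose + hab.choose)
          = Submodule.Quotient.mk (p := Wsub) (Finsupp.single l (1:ℝ)) := by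
        rw [Submodule.Quotient.mk_add, hmkb, hmkz, ← ha_def]
        abel
      have hmem := (Submodule.Quotient.eq Wsub).1 hmk2
      have := Submodule.neg_mem Wsub hmem
      rwa [neg_sub] at this
    refine (main_lemma φ h1 l hb.choose hab.choose hxb hzb hW).2 ?_ ?_
    · rw [← hFb]
      exact (pos_iff_ne_zero.1 hy0)
    · rw [← hFb]
      exact hbtop.ne


end GK
end
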